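/- arXiv:2406.08449 — 5 statements merged into one kernel-verified Lean document; each statement's English description precedes it below -/
import Mathlib

section
/- Let p > 2, c_F > 0 and L > 0. There exists a constant C > 0, depending only on p and c_F, such that for every positive integer N, with h = L/N, and every N-periodic sequence u with u_i > 0 for all i, one has (min_i u_i)^{-1} ≤ C · ( ( (h/L) Σ_i u_i )^{-1} + E_h[u]^{2/(p-2)} ). -/
open Finset

lemma sum_Icc_eq_range (g : ℤ → ℝ) (N : ℕ) :
    ∑ i ∈ Icc (1:ℤ) (N:ℤ), g i = ∑ k ∈ range N, g (1 + k) := by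
  induction N with
  | zero => simp
  | succ n ih =>
    have h1 : Icc (1:ℤ) ((n+1:ℕ):ℤ) = insert (1+(n:ℤ)) (Icc (1:ℤ) (n:ℤ)) := by
      ext x; simp only [mem_Icc, mem_insert]; push_cast; omega
    rw [h1, Finset.sum_insert (by simp), ih, Finset.sum_range_succ, add_comm]

lemma sum_shift_one (g : ℤ → ℝ) (M : ℕ) (hper : ∀ i, g (i + ((M:ℤ)+1)) = g i) (a : ℤ) :
    ∑ k ∈ range (M+1), g ((a+1) + k) = ∑ k ∈ range (M+1), g (a + k) := by
  rw [Finset.sum_range_succ, Finset.sum_range_succ' (fun k => g (a + k))]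
  have h2 : g (a+1+(M:ℤ)) = g (a + 0) := by
    rw [show a+1+(M:ℤ) = a + ((M:ℤ)+1) by ring, hper, add_zero]
  rw [h2]
  congr 1
  apply Finset.sum_congr rfl
  intro k _
  congr 1
  push_cast
  ring

lemma sum_shift (g : ℤ → ℝ) (N : ℕ) (hN : 0 < N) (hper : ∀ i, g (i + (N:ℤ)) = g i) (a : ℤ) :
    ∑ k ∈ range N, g (a + k) = ∑ k ∈ range N, g (1 + k) := by
  obtain ⟨M, rfl⟩ : ∃ M, N = M + 1 := ⟨N-1, by omega⟩
  have hper' : ∀ i, g (i + ((M:ℤ)+1)) = g i := by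
    intro i; have := hper i; push_cast at this; exact this
  have step : ∀ b : ℤ, ∑ k ∈ range (M+1), g ((b+1) + k) = ∑ k ∈ range (M+1), g (b + k) :=
    sum_shift_one g M hper'
  induction a using Int.induction_on with
  | zero => simpa using (step 0).symm
  | succ n ihn => rw [step (n:ℤ), ihn]
  | pred n ihn =>
    have := step (-(n:ℤ)-1)
    rw [show (-(n:ℤ)-1+1) = -(n:ℤ) by ring] at this
    rw [show (-(n:ℤ)-1) = -(n:ℤ)-1 from rfl, ← ihn, ← this]

lemma window_eq (g : ℤ → ℝ) (N : ℕ) (hN : 0 < N) (hper : ∀ i, g (i + (N:ℤ)) = g i) (a : ℤ) :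
    ∑ k ∈ range N, g (a + k) = ∑ i ∈ Icc (1:ℤ) (N:ℤ), g i := by
  rw [sum_shift g N hN hper a, sum_Icc_eq_range]

lemma window_le (g : ℤ → ℝ) (N : ℕ) (hN : 0 < N) (hper : ∀ i, g (i + (N:ℤ)) = g i)
    (hnn : ∀ i, 0 ≤ g i) (a : ℤ) (j : ℕ) (hj : j ≤ N) :
    ∑ k ∈ range j, g (a + k) ≤ ∑ i ∈ Icc (1:ℤ) (N:ℤ), g i := by
  rw [← window_eq g N hN hper a]
  exact Finset.sum_le_sum_of_subset_of_nonneg (Finset.range_subset_range.2 hj)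
    (fun i _ _ => hnn _)

/-- Backward-in-index forward difference quotient `d_i = (u_{i+1} - u_i)/h`. -/
noncomputable def dq (h : ℝ) (u : ℤ → ℝ) (i : ℤ) : ℝ := (u (i + 1) - u i) / h

/-- Discrete energy `E_h[u] = (h/2) Σ_i d_i² + c_F h Σ_i u_i^{-p}`, sum over `i = 1,…,N`. -/
noncomputable def Eh (p cF h : ℝ) (N : ℕ) (u : ℤ → ℝ) : ℝ :=
  h / 2 * ∑ i ∈ Icc (1 : ℤ) (N : ℤ), (dq h u i) ^ 2
    + cF * h * ∑ i ∈ Icc (1 : ℤ) (N : ℤ), u i ^ (-p)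

set_option maxHeartbeats 4000000 in
/-- `(min_i u_i)⁻¹ ≤ C ((h/L Σ_i u_i)⁻¹ + E_h[u]^{2/(p-2)})` with `C = C(p, c_F)`. -/
theorem statement0 (p cF : ℝ) (hp : 2 < p) (hcF : 0 < cF) :
    ∃ C : ℝ, 0 < C ∧
      ∀ (L : ℝ) (hL : 0 < L) (N : ℕ) (hN : 0 < N) (h : ℝ) (hh : h = L / N)
        (u : ℤ → ℝ) (hper : ∀ i : ℤ, u (i + (N : ℤ)) = u i) (hpos : ∀ i : ℤ, 0 < u i),
        ((Icc (1 : ℤ) (N : ℤ)).inf' (Finset.nonempty_Icc.mpr (by omega)) u)⁻¹ ≤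
          C * ((h / L * ∑ i ∈ Icc (1 : ℤ) (N : ℤ), u i)⁻¹
                + (Eh p cF h N u) ^ (2 / (p - 2))) := by
  have hp2 : (0:ℝ) < p - 2 := by linarith
  set C2 : ℝ := ((2:ℝ)^(p+1)/cF) ^ ((p-2)⁻¹) with hC2def
  have h2p1 : (0:ℝ) < (2:ℝ)^(p+1) := Real.rpow_pos_of_pos two_pos _
  have hC2pos : 0 < C2 := Real.rpow_pos_of_pos (by positivity) _
  clear_value C2
  refine ⟨max 2 C2, lt_of_lt_of_le two_pos (le_max_left _ _), ?_⟩
  intro L hL N hN h hh u hper hpos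
  have hhpos : 0 < h := by rw [hh]; positivity
  have hNR : (0:ℝ) < (N:ℝ) := by exact_mod_cast hN
  have hLN : h * N = L := by rw [hh]; field_simp
  obtain ⟨i₀, hi₀, hmi⟩ := Finset.exists_mem_eq_inf'
    (Finset.nonempty_Icc.mpr (by omega : (1:ℤ) ≤ (N:ℤ))) u
  rw [hmi]
  have hmpos : 0 < u i₀ := hpos i₀
  set E := Eh p cF h N u with hEdef
  set S2 := ∑ i ∈ Icc (1:ℤ) (N:ℤ), (dq h u i)^2 with hS2def
  set SP := ∑ i ∈ Icc (1:ℤ) (N:ℤ), u i ^ (-p) with hSPdef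
  clear_value E S2 SP
  have hEeq : E = h/2 * S2 + cF * h * SP := by
    rw [hEdef]; unfold Eh; rw [hS2def, hSPdef]
  have hS2nn : 0 ≤ S2 := by
    rw [hS2def]; exact Finset.sum_nonneg (fun i _ => sq_nonneg _)
  have hSPnn : 0 ≤ SP := by
    rw [hSPdef]
    exact Finset.sum_nonneg (fun i _ => (Real.rpow_pos_of_pos (hpos i) _).le)
  have hEnn : 0 ≤ E := by rw [hEeq]; positivity
  have hE1 : h * S2 ≤ 2 * E := by
    have : 0 ≤ cF * h * SP := by positivity
    rw [hEeq]; linarith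
  have hE2 : cF * h * SP ≤ E := by
    have : 0 ≤ h/2 * S2 := by positivity
    rw [hEeq]; linarith
  have hrnn : 0 ≤ E ^ (2/(p-2)) := Real.rpow_nonneg hEnn _
  have hdper : ∀ i, dq h u (i + (N:ℤ)) = dq h u i := by
    intro i; unfold dq
    rw [show i + (N:ℤ) + 1 = (i+1) + (N:ℤ) by ring, hper, hper]
  -- key pointwise estimate
  have key : ∀ j : ℕ, j ≤ N →
      u (i₀ + j) ≤ u i₀ + Real.sqrt ((j:ℝ) * h) * Real.sqrt (2 * E) := by
    intro j hj
    have tele : u (i₀ + j) - u i₀ = ∑ k ∈ range j, (u (i₀ + k + 1) - u (i₀ + k)) := by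
      have h0 := Finset.sum_range_sub (fun k : ℕ => u (i₀ + k)) j
      simp only [Nat.cast_zero, add_zero] at h0
      rw [← h0]
      apply Finset.sum_congr rfl
      intro k _
      congr 2
      push_cast
      ring
    have habs : u (i₀ + j) - u i₀ ≤ ∑ k ∈ range j, h * |dq h u (i₀ + k)| := by
      rw [tele]
      apply Finset.sum_le_sum
      intro k _
      have hdk : u (i₀ + k + 1) - u (i₀ + k) = h * dq h u (i₀ + k) := by
        unfold dq; field_simp
      rw [hdk]
      calc h * dq h u (i₀ + k) ≤ |h * dq h u (i₀ + k)| := le_abs_self _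
        _ = h * |dq h u (i₀ + k)| := by rw [abs_mul, abs_of_pos hhpos]
    have hwin : ∑ k ∈ range j, (dq h u (i₀ + k))^2 ≤ S2 := by
      rw [hS2def]
      exact window_le (fun i => (dq h u i)^2) N hN
        (fun i => by show (dq h u (i+(N:ℤ)))^2 = (dq h u i)^2; rw [hdper])
        (fun i => sq_nonneg _) i₀ j hj
    have hCS : (∑ k ∈ range j, |dq h u (i₀ + k)|)^2 ≤ (j:ℝ) * S2 := by
      have h1 := sq_sum_le_card_mul_sum_sq (s := range j)
        (f := fun k => |dq h u (i₀ + k)|)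
      simp only [card_range] at h1
      have h2 : ∑ k ∈ range j, |dq h u (i₀ + k)|^2 = ∑ k ∈ range j, (dq h u (i₀ + k))^2 := by
        apply Finset.sum_congr rfl; intro k _; rw [sq_abs]
      calc (∑ k ∈ range j, |dq h u (i₀ + k)|)^2
          ≤ (j:ℝ) * ∑ k ∈ range j, |dq h u (i₀ + k)|^2 := h1
        _ = (j:ℝ) * ∑ k ∈ range j, (dq h u (i₀ + k))^2 := by rw [h2]
        _ ≤ (j:ℝ) * S2 := by
            apply mul_le_mul_of_nonneg_left hwin (by positivity)
    have hsq : ∑ k ∈ range j, |dq h u (i₀ + k)| ≤ Real.sqrt ((j:ℝ) * S2) := by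
      rw [← Real.sqrt_sq (Finset.sum_nonneg (fun k _ => abs_nonneg _))]
      exact Real.sqrt_le_sqrt hCS
    have heq : h * Real.sqrt ((j:ℝ) * S2) = Real.sqrt ((j:ℝ)*h) * Real.sqrt (h*S2) := by
      rw [← Real.sqrt_mul (by positivity : (0:ℝ) ≤ (j:ℝ)*h) (h*S2),
        show (j:ℝ)*h*(h*S2) = h^2 * ((j:ℝ)*S2) by ring,
        Real.sqrt_mul (sq_nonneg h), Real.sqrt_sq hhpos.le]
    have hfin : u (i₀ + j) - u i₀ ≤ Real.sqrt ((j:ℝ)*h) * Real.sqrt (h*S2) := by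
      calc u (i₀ + j) - u i₀ ≤ ∑ k ∈ range j, h * |dq h u (i₀ + k)| := habs
        _ = h * ∑ k ∈ range j, |dq h u (i₀ + k)| := by rw [Finset.mul_sum]
        _ ≤ h * Real.sqrt ((j:ℝ) * S2) := mul_le_mul_of_nonneg_left hsq hhpos.le
        _ = Real.sqrt ((j:ℝ)*h) * Real.sqrt (h*S2) := heq
    have hle2E : Real.sqrt (h*S2) ≤ Real.sqrt (2*E) := Real.sqrt_le_sqrt hE1
    have : Real.sqrt ((j:ℝ)*h) * Real.sqrt (h*S2)
        ≤ Real.sqrt ((j:ℝ)*h) * Real.sqrt (2*E) :=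
      mul_le_mul_of_nonneg_left hle2E (Real.sqrt_nonneg _)
    linarith
  -- positivity of the average
  set A := h / L * ∑ i ∈ Icc (1:ℤ) (N:ℤ), u i with hAdef
  clear_value A
  have hApos : 0 < A := by
    rw [hAdef]
    apply mul_pos (by positivity)
    exact Finset.sum_pos (fun i _ => hpos i)
      (Finset.nonempty_Icc.mpr (by omega : (1:ℤ) ≤ (N:ℤ)))
  by_cases hcase : 2*E*L ≤ (u i₀)^2
  · -- Case 1: small energy; all values comparable to the min
    have hub : ∀ j ∈ range N, u (i₀ + j) ≤ 2 * u i₀ := by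
      intro j hjm
      have hj : j ≤ N := (Finset.mem_range.1 hjm).le
      have h1 := key j hj
      have hjN : (j:ℝ) ≤ (N:ℝ) := by exact_mod_cast hj
      have hjhL : (j:ℝ)*h ≤ L := by nlinarith
      have h4 : (j:ℝ)*h*(2*E) ≤ (u i₀)^2 := by nlinarith
      have h2 : Real.sqrt ((j:ℝ)*h) * Real.sqrt (2*E) ≤ u i₀ := by
        rw [← Real.sqrt_mul (by positivity : (0:ℝ) ≤ (j:ℝ)*h)]
        calc Real.sqrt ((j:ℝ)*h*(2*E)) ≤ Real.sqrt ((u i₀)^2) := Real.sqrt_le_sqrt h4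
          _ = u i₀ := Real.sqrt_sq hmpos.le
      linarith
    have hsum : ∑ i ∈ Icc (1:ℤ) (N:ℤ), u i ≤ (N:ℝ) * (2 * u i₀) := by
      rw [← window_eq u N hN hper i₀]
      calc ∑ k ∈ range N, u (i₀ + k) ≤ ∑ _k ∈ range N, 2*u i₀ :=
            Finset.sum_le_sum (fun j hj => hub j hj)
        _ = (N:ℝ) * (2*u i₀) := by
            rw [Finset.sum_const, card_range, nsmul_eq_mul]
    have hA2 : A ≤ 2 * u i₀ := by
      rw [hAdef]
      calc h/L * ∑ i ∈ Icc (1:ℤ) (N:ℤ), u i ≤ h/L * ((N:ℝ)*(2*u i₀)) := by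
            apply mul_le_mul_of_nonneg_left hsum (by positivity)
        _ = (h*(N:ℝ)/L) * (2*u i₀) := by ring
        _ = 2*u i₀ := by rw [hLN]; field_simp
    have hinv : (u i₀)⁻¹ ≤ 2 * A⁻¹ := by
      have h5 : (2*u i₀)⁻¹ ≤ A⁻¹ := by
        apply inv_anti₀ hApos hA2
      have h6 : (u i₀)⁻¹ = 2 * (2*u i₀)⁻¹ := by
        field_simp
      rw [h6]
      linarith
    have h7 : 2 * A⁻¹ ≤ max 2 C2 * (A⁻¹ + E ^ (2/(p-2))) := by
      have h8 : (2:ℝ) ≤ max 2 C2 := le_max_left _ _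
      have h9 : 0 ≤ A⁻¹ := by positivity
      calc 2 * A⁻¹ ≤ max 2 C2 * A⁻¹ := mul_le_mul_of_nonneg_right h8 h9
        _ ≤ max 2 C2 * (A⁻¹ + E ^ (2/(p-2))) := by
            apply mul_le_mul_of_nonneg_left (by linarith) (by linarith)
    linarith
  · -- Case 2: energy dominates
    push_neg at hcase
    have h2EL : 0 < 2*E*L := (pow_pos hmpos 2).trans hcase
    have hEpos : 0 < E := by nlinarith
    set t := (u i₀)^2 / (2*E) with htdef
    clear_value t
    have htpos : 0 < t := by
      rw [htdef]; exact div_pos (pow_pos hmpos 2) (by linarith)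
    have htL : t < L := by
      rw [htdef, div_lt_iff₀ (by positivity)]
      nlinarith
    set K := ⌊t/h⌋₊ with hKdef
    have hKle : (K:ℝ) ≤ t/h := Nat.floor_le (by positivity)
    have hKlt : t < (K+1) * h := by
      have := Nat.lt_floor_add_one (t/h)
      rw [div_lt_iff₀ hhpos] at this
      convert this using 2 <;> push_cast <;> ring
    have hKN : K+1 ≤ N := by
      have h1 : t/h < (N:ℝ) := by
        rw [div_lt_iff₀ hhpos]
        nlinarith
      have h2 : (K:ℝ) < (N:ℝ) := lt_of_le_of_lt hKle h1
      have h3 : K < N := by exact_mod_cast h2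
      omega
    clear_value K
    set B := (2*u i₀) ^ (-p) with hBdef
    have hBpos : 0 < B := by
      rw [hBdef]; exact Real.rpow_pos_of_pos (by positivity) _
    clear_value B
    have hub2 : ∀ j ∈ range (K+1), B ≤ u (i₀+(j:ℤ)) ^ (-p) := by
      intro j hj
      rw [hBdef]
      have hjK : j ≤ K := by
        have := Finset.mem_range.1 hj; omega
      have hjh : (j:ℝ)*h ≤ t := by
        have hjK' : (j:ℝ) ≤ (K:ℝ) := by exact_mod_cast hjK
        calc (j:ℝ)*h ≤ (t/h)*h := by nlinarith
          _ = t := by field_simp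
      have hule : u (i₀+(j:ℤ)) ≤ 2*u i₀ := by
        have h1 := key j (le_trans (by omega) hKN)
        have h4 : (j:ℝ)*h*(2*E) ≤ (u i₀)^2 := by
          have ht2E : t*(2*E) = (u i₀)^2 := by rw [htdef]; field_simp
          nlinarith
        have h2 : Real.sqrt ((j:ℝ)*h) * Real.sqrt (2*E) ≤ u i₀ := by
          rw [← Real.sqrt_mul (by positivity : (0:ℝ) ≤ (j:ℝ)*h)]
          calc Real.sqrt ((j:ℝ)*h*(2*E)) ≤ Real.sqrt ((u i₀)^2) := Real.sqrt_le_sqrt h4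
            _ = u i₀ := Real.sqrt_sq hmpos.le
        linarith
      exact Real.rpow_le_rpow_of_nonpos (hpos _) hule (by linarith : -p ≤ (0:ℝ))
    have hsum2 : ((K:ℝ)+1) * B ≤ SP := by
      have h1 : ∑ _k ∈ range (K+1), B ≤ ∑ k ∈ range (K+1), u (i₀+(k:ℤ)) ^ (-p) :=
        Finset.sum_le_sum hub2
      have h2 : ∑ k ∈ range (K+1), u (i₀+(k:ℤ)) ^ (-p) ≤ SP := by
        rw [hSPdef]
        exact window_le (fun i => u i ^ (-p)) N hN
          (fun i => by show u (i+(N:ℤ)) ^ (-p) = u i ^ (-p); rw [hper])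
          (fun i => (Real.rpow_pos_of_pos (hpos i) _).le) i₀ (K+1) hKN
      have h3 : ∑ _k ∈ range (K+1), B = ((K:ℝ)+1) * B := by
        rw [Finset.sum_const, card_range, nsmul_eq_mul]; push_cast; ring
      rw [h3] at h1
      linarith
    have hmain : cF * t * B ≤ E := by
      have s1 : cF*h*(((K:ℝ)+1)*B) ≤ cF*h*SP :=
        mul_le_mul_of_nonneg_left hsum2 (by positivity)
      have s2 : cF*t*B ≤ cF*h*(((K:ℝ)+1)*B) := by
        have s3 := mul_le_mul_of_nonneg_left hKlt.le (by positivity : (0:ℝ) ≤ cF*B)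
        nlinarith [s3]
      linarith
    have hfin2 : cF * (u i₀)^2 * B ≤ 2*E^2 := by
      have h1 := mul_le_mul_of_nonneg_right hmain (by positivity : (0:ℝ) ≤ 2*E)
      have h2 : cF * t * B * (2*E) = cF * (u i₀)^2 * B := by
        rw [htdef]; field_simp; try ring
      nlinarith
    -- convert to the rpow inequality
    have hBsplit : B = (2:ℝ)^(-p) * (u i₀)^(-p) := by
      rw [hBdef, Real.mul_rpow (by norm_num) hmpos.le]
    have hab : (2:ℝ)^(-p) * (2:ℝ)^(p+1) = 2 := by
      rw [← Real.rpow_add two_pos]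
      norm_num
    have hexp : cF * ((u i₀)^2 * (u i₀)^(-p)) ≤ (2:ℝ)^(p+1) * E^2 := by
      have h1 := mul_le_mul_of_nonneg_right hfin2 h2p1.le
      have h2 : cF * (u i₀)^2 * B * (2:ℝ)^(p+1)
          = cF * ((u i₀)^2 * (u i₀)^(-p)) * 2 := by
        rw [hBsplit, show cF * (u i₀)^2 * ((2:ℝ)^(-p) * (u i₀)^(-p)) * (2:ℝ)^(p+1)
          = cF * ((u i₀)^2 * (u i₀)^(-p)) * ((2:ℝ)^(-p) * (2:ℝ)^(p+1)) by ring, hab]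
      nlinarith
    have hid : (u i₀)⁻¹ ^ (p-2) = (u i₀)^2 * (u i₀)^(-p) := by
      rw [Real.inv_rpow hmpos.le, ← Real.rpow_neg hmpos.le,
        show -(p-2) = 2 + (-p) by ring, Real.rpow_add hmpos,
        show ((2:ℝ)) = ((2:ℕ):ℝ) by norm_num, Real.rpow_natCast]
    have hexp2 : (u i₀)⁻¹ ^ (p-2) ≤ (2:ℝ)^(p+1) * E^2 / cF := by
      rw [hid, le_div_iff₀ hcF]
      nlinarith
    have hmono := Real.rpow_le_rpow (by positivity) hexp2 (by positivity : (0:ℝ) ≤ (p-2)⁻¹)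
    have hlhs : ((u i₀)⁻¹ ^ (p-2)) ^ ((p-2)⁻¹) = (u i₀)⁻¹ := by
      rw [← Real.rpow_mul (by positivity), mul_inv_cancel₀ hp2.ne', Real.rpow_one]
    have hrhs : ((2:ℝ)^(p+1) * E^2 / cF) ^ ((p-2)⁻¹) = C2 * E ^ (2/(p-2)) := by
      rw [show (2:ℝ)^(p+1) * E^2 / cF = ((2:ℝ)^(p+1)/cF) * E^2 by ring,
        Real.mul_rpow (by positivity) (by positivity), hC2def]
      congr 1
      rw [show (E:ℝ)^2 = E^((2:ℕ):ℝ) by rw [Real.rpow_natCast],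
        ← Real.rpow_mul hEnn]
      norm_num
      rw [div_eq_mul_inv]
    have hkey2 : (u i₀)⁻¹ ≤ C2 * E ^ (2/(p-2)) := by
      rw [← hlhs, ← hrhs]; exact hmono
    have h7 : C2 * E ^ (2/(p-2)) ≤ max 2 C2 * (A⁻¹ + E ^ (2/(p-2))) := by
      have h8 : C2 ≤ max 2 C2 := le_max_right _ _
      have h9 : 0 ≤ A⁻¹ := by positivity
      have h10 : (0:ℝ) ≤ max 2 C2 := le_trans (by norm_num) (le_max_left 2 C2)
      calc C2 * E ^ (2/(p-2)) ≤ max 2 C2 * E ^ (2/(p-2)) :=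
            mul_le_mul_of_nonneg_right h8 hrnn
        _ ≤ max 2 C2 * (A⁻¹ + E ^ (2/(p-2))) := by
            apply mul_le_mul_of_nonneg_left (by linarith) h10
    exact le_trans hkey2 h7
end

section
/- Let p > 2, c_F > 0 and L > 0, let N be a positive integer and h = L/N, and let u be an N-periodic sequence with u_i > 0 for all i. If E_h[u] ≤ c_F · h^{−(p−2)/(p+2)}, then for every i one has max{ u_i/u_{i+1}, u_i/u_{i−1} } ≤ 1 + √(2 c_F). -/
open Finset

/-- oscillation estimate: if `E_h[u] ≤ c_F h^{-(p-2)/(p+2)}`, then for every `i`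
one has `max{u_i/u_{i+1}, u_i/u_{i-1}} ≤ 1 + √(2 c_F)`. -/
theorem statement2 (p cF L : ℝ) (hp : 2 < p) (hcF : 0 < cF) (hL : 0 < L)
    (N : ℕ) (hN : 0 < N) (h : ℝ) (hh : h = L / N)
    (u : ℤ → ℝ) (hper : ∀ i : ℤ, u (i + (N : ℤ)) = u i) (hpos : ∀ i : ℤ, 0 < u i)
    (hE : Eh p cF h N u ≤ cF * h ^ (-(p - 2) / (p + 2))) :
    ∀ i : ℤ, max (u i / u (i + 1)) (u i / u (i - 1)) ≤ 1 + Real.sqrt (2 * cF) := by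
  have hh0 : 0 < h := by rw [hh]; positivity
  have hp2 : (0:ℝ) < p + 2 := by linarith
  set β : ℝ := 2 / (p + 2) with hβ
  set M : ℝ := h ^ β with hMdef
  have hM0 : 0 < M := Real.rpow_pos_of_pos hh0 β
  set C : ℝ := cF * h ^ (-(p - 2) / (p + 2)) with hCdef
  have hS1 : 0 ≤ ∑ j ∈ Icc (1:ℤ) (N:ℤ), (dq h u j) ^ 2 :=
    Finset.sum_nonneg fun j _ => sq_nonneg _
  have hS2 : 0 ≤ ∑ j ∈ Icc (1:ℤ) (N:ℤ), u j ^ (-p) :=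
    Finset.sum_nonneg fun j _ => (Real.rpow_pos_of_pos (hpos j) _).le
  rw [Eh] at hE
  -- exponent identities
  have hexp1 : h * h ^ (-(p - 2) / (p + 2)) = M ^ 2 := by
    have e1 : M ^ 2 = h ^ (β * 2) := by
      rw [hMdef, Real.rpow_mul hh0.le, Real.rpow_two]
    have e2 : h * h ^ (-(p - 2) / (p + 2)) = h ^ (1 + -(p - 2) / (p + 2)) := by
      rw [Real.rpow_add hh0, Real.rpow_one]
    rw [e1, e2]
    congr 1
    have hne : p + 2 ≠ 0 := ne_of_gt hp2
    rw [hβ]; field_simp; ring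
  have hexp2 : h ^ (-(p - 2) / (p + 2)) / h = M ^ (-p) := by
    have e1 : M ^ (-p) = h ^ (β * (-p)) := by
      rw [hMdef, Real.rpow_mul hh0.le]
    have e2 : h ^ (-(p - 2) / (p + 2)) / h = h ^ (-(p - 2) / (p + 2) - 1) := by
      rw [Real.rpow_sub hh0, Real.rpow_one]
    rw [e1, e2]
    congr 1
    have hne : p + 2 ≠ 0 := ne_of_gt hp2
    rw [hβ]; field_simp; ring
  -- bounds on indices in the range
  have key1 : ∀ j ∈ Icc (1:ℤ) (N:ℤ), (u (j + 1) - u j) ^ 2 ≤ 2 * cF * M ^ 2 := by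
    intro j hj
    have h1 : (dq h u j) ^ 2 ≤ ∑ k ∈ Icc (1:ℤ) (N:ℤ), (dq h u k) ^ 2 :=
      Finset.single_le_sum (f := fun k => (dq h u k) ^ 2) (fun k _ => sq_nonneg _) hj
    have hb : h / 2 * (dq h u j) ^ 2 ≤ C := by
      have h2 : h / 2 * (dq h u j) ^ 2 ≤ h / 2 * ∑ k ∈ Icc (1:ℤ) (N:ℤ), (dq h u k) ^ 2 := by
        apply mul_le_mul_of_nonneg_left h1 (by positivity)
      have h3 : (0:ℝ) ≤ cF * h * ∑ k ∈ Icc (1:ℤ) (N:ℤ), u k ^ (-p) := by positivity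
      calc h / 2 * (dq h u j) ^ 2 ≤ _ := h2
        _ ≤ _ := le_add_of_nonneg_right h3
        _ ≤ C := hE
    have hd : u (j + 1) - u j = h * dq h u j := by
      rw [dq]; field_simp
    have : (u (j + 1) - u j) ^ 2 = 2 * h * (h / 2 * (dq h u j) ^ 2) := by
      rw [hd]; ring
    rw [this]
    calc 2 * h * (h / 2 * (dq h u j) ^ 2) ≤ 2 * h * C := by
          apply mul_le_mul_of_nonneg_left hb (by positivity)
      _ = 2 * cF * (h * h ^ (-(p - 2) / (p + 2))) := by rw [hCdef]; ring
      _ = 2 * cF * M ^ 2 := by rw [hexp1]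
  have key2 : ∀ j ∈ Icc (1:ℤ) (N:ℤ), M ≤ u j := by
    intro j hj
    have h1 : u j ^ (-p) ≤ ∑ k ∈ Icc (1:ℤ) (N:ℤ), u k ^ (-p) :=
      Finset.single_le_sum (fun k _ => (Real.rpow_pos_of_pos (hpos k) _).le) hj
    have hb : cF * h * u j ^ (-p) ≤ C := by
      have h2 : cF * h * u j ^ (-p) ≤ cF * h * ∑ k ∈ Icc (1:ℤ) (N:ℤ), u k ^ (-p) := by
        apply mul_le_mul_of_nonneg_left h1 (by positivity)
      have h3 : (0:ℝ) ≤ h / 2 * ∑ k ∈ Icc (1:ℤ) (N:ℤ), (dq h u k) ^ 2 := by positivity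
      calc cF * h * u j ^ (-p) ≤ _ := h2
        _ ≤ _ := le_add_of_nonneg_left h3
        _ ≤ C := hE
    have hb2 : u j ^ (-p) ≤ M ^ (-p) := by
      rw [hCdef] at hb
      have hb' : h * u j ^ (-p) ≤ h ^ (-(p - 2) / (p + 2)) := by
        nlinarith [hb, hcF]
      rw [← hexp2, le_div_iff₀ hh0]
      linarith
    by_contra hc
    push_neg at hc
    have := Real.rpow_lt_rpow_of_neg (hpos j) hc (by linarith : -p < 0)
    linarith
  -- periodicity
  have hperk : ∀ k : ℤ, ∀ i : ℤ, u (i + (N:ℤ) * k) = u i := by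
    intro k
    induction k using Int.induction_on with
    | zero => intro i; simp
    | succ k ih =>
      intro i
      have : i + (N:ℤ) * (k + 1) = (i + (N:ℤ) * k) + (N:ℤ) := by ring
      rw [this, hper, ih]
    | pred k ih =>
      intro i
      have h2 := hper (i + (N:ℤ) * (-(k:ℤ) - 1))
      have e : i + (N:ℤ) * (-(k:ℤ) - 1) + (N:ℤ) = i + (N:ℤ) * (-(k:ℤ)) := by ring
      rw [e, ih] at h2
      exact h2.symm
  have hrep : ∀ i : ℤ, ∃ j, j ∈ Icc (1:ℤ) (N:ℤ) ∧ ∀ m : ℤ, u (i + m) = u (j + m) := by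
    intro i
    have hNz : (N:ℤ) ≠ 0 := by exact_mod_cast hN.ne'
    have hN0 : (0:ℤ) < N := by exact_mod_cast hN
    set r := (i - 1) % (N:ℤ) with hr
    set q := (i - 1) / (N:ℤ) with hq
    have e : r + (N:ℤ) * q = i - 1 := Int.emod_add_mul_ediv (i - 1) (N:ℤ)
    have hr0 : 0 ≤ r := Int.emod_nonneg _ hNz
    have hrN : r < N := Int.emod_lt_of_pos _ hN0
    refine ⟨r + 1, ?_, ?_⟩
    · simp only [mem_Icc]; omega
    · intro m
      have : i + m = (r + 1 + m) + (N:ℤ) * q := by linarith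
      rw [this, hperk]
  have keyA : ∀ i : ℤ, (u (i + 1) - u i) ^ 2 ≤ 2 * cF * M ^ 2 := by
    intro i
    obtain ⟨j, hj, hju⟩ := hrep i
    have e0 : u i = u j := by simpa using hju 0
    have e1 : u (i + 1) = u (j + 1) := hju 1
    rw [e0, e1]
    exact key1 j hj
  have keyB : ∀ i : ℤ, M ≤ u i := by
    intro i
    obtain ⟨j, hj, hju⟩ := hrep i
    have e0 : u i = u j := by simpa using hju 0
    rw [e0]
    exact key2 j hj
  -- conclusion
  set s := Real.sqrt (2 * cF) with hs
  have hs0 : 0 ≤ s := Real.sqrt_nonneg _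
  have hs2 : s ^ 2 = 2 * cF := Real.sq_sqrt (by positivity)
  have main : ∀ i : ℤ, u i ≤ u (i + 1) + s * M ∧ u (i + 1) ≤ u i + s * M := by
    intro i
    have hA := keyA i
    constructor <;>
      nlinarith [sq_nonneg (u (i + 1) - u i - s * M), sq_nonneg (u (i + 1) - u i + s * M),
        mul_nonneg hs0 hM0.le]
  intro i
  have h1 : u i / u (i + 1) ≤ 1 + s := by
    rw [div_le_iff₀ (hpos (i + 1))]
    have h3 := (main i).1
    have hB := keyB (i + 1)
    have h4 : s * M ≤ s * u (i + 1) := mul_le_mul_of_nonneg_left hB hs0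
    linarith
  have h2 : u i / u (i - 1) ≤ 1 + s := by
    rw [div_le_iff₀ (hpos (i - 1))]
    have h3 := (main (i - 1)).2
    rw [sub_add_cancel] at h3
    have hB := keyB (i - 1)
    have h4 : s * M ≤ s * u (i - 1) := mul_le_mul_of_nonneg_left hB hs0
    linarith
  exact max_le h1 h2
end

section
/- Let n ∈ [2,4) and L > 0. For every δ > 0 there exists a constant C_δ > 0, depending only on n, L and δ, such that for every positive integer N, with h = L/N, and every N-periodic sequence u with u_i > 0 for all i, one has h Σ_i u_i^n ≤ δ · h Σ_i d_i² + C_δ · ( ( h Σ_i u_i )^{(n+2)/(4−n)} + ( h Σ_i u_i )^n ). -/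
open Finset

lemma ico_succ (a b : ℤ) : Ico a (b+1) = Icc a b := by ext i; simp

lemma tele (v : ℤ → ℝ) (a : ℤ) : ∀ b, a ≤ b → ∑ i ∈ Ico a b, (v (i+1) - v i) = v b - v a := by
  refine fun b hb => Int.le_induction
    (motive := fun b _ => ∑ i ∈ Ico a b, (v (i+1) - v i) = v b - v a) ?_ ?_ b hb
  · simp
  · intro b hb ih
    have h1 : Ico a (b+1) = insert b (Ico a b) := by
      rw [ico_succ, ← Ico_insert_right hb]
    rw [h1, Finset.sum_insert (by simp), ih]; ring

lemma shiftsum (c : ℤ) (f : ℤ → ℝ) (a b : ℤ) :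
    ∑ i ∈ Ico (a+c) (b+c), f i = ∑ i ∈ Ico a b, f (i+c) := by
  rw [← map_add_right_Ico, Finset.sum_map]; rfl

lemma consec (f : ℤ → ℝ) {a b c : ℤ} (hab : a ≤ b) (hbc : b ≤ c) :
    ∑ i ∈ Ico a b, f i + ∑ i ∈ Ico b c, f i = ∑ i ∈ Ico a c, f i := by
  rw [← Finset.sum_union (Finset.Ico_disjoint_Ico_consecutive a b c),
    Ico_union_Ico_eq_Ico hab hbc]

lemma tv (N : ℕ) (v : ℤ → ℝ) (hv : ∀ i, v (i + (N:ℤ)) = v i) {j k : ℤ}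
    (hj1 : 1 ≤ j) (hj2 : j ≤ (N:ℤ)) (hk1 : 1 ≤ k) (hk2 : k ≤ (N:ℤ)) :
    v j - v k ≤ ∑ i ∈ Icc (1:ℤ) (N:ℤ), |v (i+1) - v i| := by
  set g : ℤ → ℝ := fun i => |v (i+1) - v i| with hg
  have hg0 : ∀ i, 0 ≤ g i := fun i => abs_nonneg _
  have key : ∀ a b : ℤ, a ≤ b → v b - v a ≤ ∑ i ∈ Ico a b, g i := by
    intro a b hab
    rw [← tele v a b hab]
    exact Finset.sum_le_sum fun i _ => le_abs_self _
  have hIcc : Icc (1:ℤ) (N:ℤ) = Ico 1 ((N:ℤ)+1) := (ico_succ 1 (N:ℤ)).symm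
  rw [hIcc]
  rcases le_or_gt k j with hkj | hjk
  · calc v j - v k ≤ ∑ i ∈ Ico k j, g i := key k j hkj
      _ ≤ ∑ i ∈ Ico 1 ((N:ℤ)+1), g i :=
        Finset.sum_le_sum_of_subset_of_nonneg
          (Finset.Ico_subset_Ico hk1 (by omega)) (fun i _ _ => hg0 i)
  · have h1 : v j - v k = v (j + (N:ℤ)) - v k := by rw [hv j]
    have h2 : v (j + (N:ℤ)) - v k ≤ ∑ i ∈ Ico k (j + (N:ℤ)), g i := key _ _ (by omega)
    have h3 : ∑ i ∈ Ico k ((N:ℤ)+1), g i + ∑ i ∈ Ico ((N:ℤ)+1) (j+(N:ℤ)), g i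
        = ∑ i ∈ Ico k (j + (N:ℤ)), g i := consec g (by omega) (by omega)
    have h4 : ∑ i ∈ Ico ((N:ℤ)+1) (j+(N:ℤ)), g i = ∑ i ∈ Ico 1 j, g i := by
      have e0 : ((N:ℤ)+1) = 1 + (N:ℤ) := by ring
      rw [e0, shiftsum (N:ℤ) g 1 j]
      refine Finset.sum_congr rfl fun i _ => ?_
      show |v (i + (N:ℤ) + 1) - v (i + (N:ℤ))| = |v (i+1) - v i|
      have e1 : i + (N:ℤ) + 1 = (i+1) + (N:ℤ) := by ring
      rw [e1, hv (i+1), hv i]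
    have h5 : ∑ i ∈ Ico k ((N:ℤ)+1), g i ≤ ∑ i ∈ Ico j ((N:ℤ)+1), g i :=
      Finset.sum_le_sum_of_subset_of_nonneg
        (Finset.Ico_subset_Ico (by omega) le_rfl) (fun i _ _ => hg0 i)
    have h6 : ∑ i ∈ Ico 1 j, g i + ∑ i ∈ Ico j ((N:ℤ)+1), g i = ∑ i ∈ Ico 1 ((N:ℤ)+1), g i :=
      consec g (by omega) (by omega)
    linarith

lemma sumshift1 (N : ℕ) (u : ℤ → ℝ) (hper : ∀ i : ℤ, u (i + (N:ℤ)) = u i) :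
    ∑ i ∈ Icc (1:ℤ) (N:ℤ), u (i+1) = ∑ i ∈ Icc (1:ℤ) (N:ℤ), u i := by
  have h0 : ∑ i ∈ Ico (1:ℤ) ((N:ℤ)+1), (u (i+1) - u i) = u ((N:ℤ)+1) - u 1 :=
    tele u 1 ((N:ℤ)+1) (by omega)
  have h1 : u ((N:ℤ)+1) = u 1 := by
    have e : (N:ℤ)+1 = 1 + (N:ℤ) := by ring
    rw [e, hper 1]
  rw [Finset.sum_sub_distrib, h1] at h0
  rw [← ico_succ]
  linarith

set_option maxHeartbeats 2000000 in
/-- discrete Gagliardo–Nirenberg-type bound: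
`h Σ_i u_i^n ≤ δ h Σ_i d_i² + C_δ ((h Σ_i u_i)^{(n+2)/(4-n)} + (h Σ_i u_i)^n)`. -/
theorem statement11 (n L : ℝ) (hn : n ∈ Set.Ico (2 : ℝ) 4) (hL : 0 < L) :
    ∀ δ : ℝ, 0 < δ → ∃ Cδ : ℝ, 0 < Cδ ∧
      ∀ (N : ℕ) (hN : 0 < N) (h : ℝ) (hh : h = L / N)
        (u : ℤ → ℝ) (hper : ∀ i : ℤ, u (i + (N : ℤ)) = u i) (hpos : ∀ i : ℤ, 0 < u i),
        h * (∑ i ∈ Icc (1 : ℤ) (N : ℤ), u i ^ n) ≤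
          δ * (h * ∑ i ∈ Icc (1 : ℤ) (N : ℤ), (dq h u i) ^ 2)
          + Cδ * ((h * ∑ i ∈ Icc (1 : ℤ) (N : ℤ), u i) ^ ((n + 2) / (4 - n))
              + (h * ∑ i ∈ Icc (1 : ℤ) (N : ℤ), u i) ^ n) := by
  obtain ⟨hn2, hn4⟩ := hn
  intro δ hδ
  set θ : ℝ := (n-1)/3 with hθ
  clear_value θ
  have hθ0 : 0 < θ := by rw [hθ]; linarith
  have hθ1 : θ < 1 := by rw [hθ]; linarith
  set q : ℝ := 3/(4-n) with hqdef
  clear_value q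
  have h4n : 0 < 4 - n := by linarith
  have hq1 : 1 ≤ q := by rw [hqdef, le_div_iff₀ h4n]; linarith
  set Cδ : ℝ := (2/L)^(n-1) + (8 * δ^(-θ))^q + 1 with hC
  clear_value Cδ
  have hc1 : (0:ℝ) ≤ (2/L)^(n-1) := Real.rpow_nonneg (by positivity) _
  have hc2 : (0:ℝ) ≤ (8 * δ^(-θ))^q := Real.rpow_nonneg (by positivity) _
  have hCδ0 : 0 < Cδ := by rw [hC]; linarith
  refine ⟨Cδ, hCδ0, ?_⟩
  intro N hN h hh u hper hpos
  have hNR : (0:ℝ) < (N:ℝ) := by exact_mod_cast hN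
  have hh0 : 0 < h := by rw [hh]; positivity
  set S := h * ∑ i ∈ Icc (1:ℤ) (N:ℤ), u i with hS
  set D := h * ∑ i ∈ Icc (1:ℤ) (N:ℤ), (dq h u i)^2 with hD
  clear_value S D
  have hne : (Icc (1:ℤ) (N:ℤ)).Nonempty := ⟨1, by simp only [Finset.mem_Icc]; omega⟩
  obtain ⟨j, hjmem, hjmax⟩ := Finset.exists_max_image (Icc (1:ℤ) (N:ℤ)) u hne
  obtain ⟨k, hkmem, hkmin⟩ := Finset.exists_min_image (Icc (1:ℤ) (N:ℤ)) u hne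
  set M := u j with hM
  set m := u k with hm
  clear_value M m
  have hM0 : 0 < M := by rw [hM]; exact hpos j
  have hm0 : 0 < m := by rw [hm]; exact hpos k
  have hmM : m ≤ M := by rw [hm]; exact hjmax k hkmem
  have hSsum : 0 < ∑ i ∈ Icc (1:ℤ) (N:ℤ), u i := Finset.sum_pos (fun i _ => hpos i) hne
  have hS0 : 0 < S := by rw [hS]; exact mul_pos hh0 hSsum
  have hDsum0 : 0 ≤ ∑ i ∈ Icc (1:ℤ) (N:ℤ), (dq h u i)^2 :=
    Finset.sum_nonneg fun i _ => sq_nonneg _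
  have hD0 : 0 ≤ D := by rw [hD]; exact mul_nonneg hh0.le hDsum0
  have hSD0 : 0 ≤ S * D := mul_nonneg hS0.le hD0
  have hSn0 : 0 ≤ S^n := Real.rpow_nonneg hS0.le _
  have hSe0 : 0 ≤ S^((n+2)/(4-n)) := Real.rpow_nonneg hS0.le _
  have hδD0 : 0 ≤ δ * D := mul_nonneg hδ.le hD0
  -- u (i+1) ≤ M on the window
  have hup1 : ∀ i ∈ Icc (1:ℤ) (N:ℤ), u (i+1) ≤ M := by
    intro i hi
    simp only [Finset.mem_Icc] at hi
    rcases eq_or_lt_of_le hi.2 with he | hlt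
    · have e : i + 1 = 1 + (N:ℤ) := by omega
      rw [e, hper 1]
      exact hjmax 1 (by simp only [Finset.mem_Icc]; omega)
    · exact hjmax (i+1) (by simp only [Finset.mem_Icc]; omega)
  -- Step B : L * m ≤ S
  have hmS : L * m ≤ S := by
    have hcard : (Icc (1:ℤ) (N:ℤ)).card = N := by
      rw [Int.card_Icc]; omega
    have h1 : (Icc (1:ℤ) (N:ℤ)).card • m ≤ ∑ i ∈ Icc (1:ℤ) (N:ℤ), u i :=
      Finset.card_nsmul_le_sum _ _ _ (fun i hi => hkmin i hi)
    rw [hcard, nsmul_eq_mul] at h1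
    have h2 : h * ((N:ℝ) * m) ≤ S := by
      rw [hS]; exact mul_le_mul_of_nonneg_left h1 hh0.le
    have h3 : h * ((N:ℝ)*m) = L * m := by rw [hh]; field_simp
    linarith
  -- Step A : LHS ≤ M^(n-1) * S
  have hA : h * (∑ i ∈ Icc (1:ℤ) (N:ℤ), u i ^ n) ≤ M ^ (n-1) * S := by
    have hsum : ∑ i ∈ Icc (1:ℤ) (N:ℤ), u i ^ n
        ≤ ∑ i ∈ Icc (1:ℤ) (N:ℤ), M^(n-1) * u i := by
      refine Finset.sum_le_sum fun i hi => ?_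
      have e1 : u i ^ n = u i ^ (n-1) * u i := by
        nth_rewrite 1 [show n = (n-1)+1 by ring]
        rw [Real.rpow_add_one (hpos i).ne']
      rw [e1]
      exact mul_le_mul_of_nonneg_right
        (Real.rpow_le_rpow (hpos i).le (hjmax i hi) (by linarith)) (hpos i).le
    calc h * (∑ i ∈ Icc (1:ℤ) (N:ℤ), u i ^ n)
        ≤ h * ∑ i ∈ Icc (1:ℤ) (N:ℤ), M^(n-1) * u i := mul_le_mul_of_nonneg_left hsum hh0.le
      _ = M^(n-1) * S := by rw [← Finset.mul_sum, hS]; ring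
  -- Step C : (M^2 - m^2)^2 ≤ 4 M S D
  have hC2 : (M^2 - m^2)^2 ≤ 4 * M * S * D := by
    set T := ∑ i ∈ Icc (1:ℤ) (N:ℤ), (u (i+1) + u i) * |dq h u i| with hT
    clear_value T
    have hT0 : 0 ≤ T := by
      rw [hT]
      exact Finset.sum_nonneg fun i _ => mul_nonneg
        (by have := hpos (i+1); have := hpos i; linarith) (abs_nonneg _)
    have c1 : M^2 - m^2 ≤ ∑ i ∈ Icc (1:ℤ) (N:ℤ), |u (i+1)^2 - u i^2| := by
      have := tv N (fun i => u i ^ 2) (fun i => by rw [hper i])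
        (Finset.mem_Icc.mp hjmem).1 (Finset.mem_Icc.mp hjmem).2
        (Finset.mem_Icc.mp hkmem).1 (Finset.mem_Icc.mp hkmem).2
      rw [hM, hm]
      simpa using this
    have c2 : ∀ i : ℤ, |u (i+1)^2 - u i^2| = (u (i+1) + u i) * (h * |dq h u i|) := by
      intro i
      have e1 : u (i+1)^2 - u i^2 = (u (i+1) + u i) * (u (i+1) - u i) := by ring
      have e2 : h * |dq h u i| = |u (i+1) - u i| := by
        rw [dq, abs_div, abs_of_pos hh0]
        field_simp
      rw [e1, abs_mul, abs_of_pos (by have := hpos (i+1); have := hpos i; linarith), e2]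
    have c1' : M^2 - m^2 ≤ h * T := by
      have e : ∑ i ∈ Icc (1:ℤ) (N:ℤ), |u (i+1)^2 - u i^2| = h * T := by
        rw [hT, Finset.mul_sum]
        exact Finset.sum_congr rfl fun i _ => by rw [c2 i]; ring
      linarith [c1]
    have cCS : T^2 ≤ (∑ i ∈ Icc (1:ℤ) (N:ℤ), (u (i+1) + u i)^2)
        * (∑ i ∈ Icc (1:ℤ) (N:ℤ), (dq h u i)^2) := by
      have := Finset.sum_mul_sq_le_sq_mul_sq (Icc (1:ℤ) (N:ℤ))
        (fun i => u (i+1) + u i) (fun i => |dq h u i|)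
      rw [hT]
      simpa [sq_abs] using this
    have cW : ∑ i ∈ Icc (1:ℤ) (N:ℤ), (u (i+1) + u i)^2
        ≤ 2*M * ∑ i ∈ Icc (1:ℤ) (N:ℤ), (u (i+1) + u i) := by
      rw [Finset.mul_sum]
      refine Finset.sum_le_sum fun i hi => ?_
      have h1 : u (i+1) + u i ≤ 2*M := by
        have := hup1 i hi; have := hjmax i hi; linarith
      have h2 : 0 ≤ u (i+1) + u i := by
        have := hpos (i+1); have := hpos i; linarith
      nlinarith
    have cw2 : ∑ i ∈ Icc (1:ℤ) (N:ℤ), (u (i+1) + u i)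
        = 2 * ∑ i ∈ Icc (1:ℤ) (N:ℤ), u i := by
      rw [Finset.sum_add_distrib, sumshift1 N u hper]; ring
    have cW' : ∑ i ∈ Icc (1:ℤ) (N:ℤ), (u (i+1) + u i)^2
        ≤ 4*M * ∑ i ∈ Icc (1:ℤ) (N:ℤ), u i := by
      rw [cw2] at cW; linarith
    have hMm2 : 0 ≤ M^2 - m^2 := by
      have := pow_le_pow_left₀ hm0.le hmM 2
      linarith
    calc (M^2 - m^2)^2 ≤ (h*T)^2 := pow_le_pow_left₀ hMm2 c1' 2
      _ = h^2 * T^2 := by ring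
      _ ≤ h^2 * ((∑ i ∈ Icc (1:ℤ) (N:ℤ), (u (i+1) + u i)^2)
            * (∑ i ∈ Icc (1:ℤ) (N:ℤ), (dq h u i)^2)) :=
          mul_le_mul_of_nonneg_left cCS (by positivity)
      _ ≤ h^2 * ((4*M * ∑ i ∈ Icc (1:ℤ) (N:ℤ), u i)
            * (∑ i ∈ Icc (1:ℤ) (N:ℤ), (dq h u i)^2)) :=
          mul_le_mul_of_nonneg_left
            (mul_le_mul_of_nonneg_right cW' hDsum0) (by positivity)
      _ = 4 * M * S * D := by rw [hS, hD]; ring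
  -- final case split
  rcases le_or_gt M (2*S/L) with hM2 | hM2
  · -- small max case
    have hMn : M^(n-1) ≤ (2/L)^(n-1) * S^(n-1) := by
      have h1 : M^(n-1) ≤ (2*S/L)^(n-1) := Real.rpow_le_rpow hM0.le hM2 (by linarith)
      rwa [show (2*S/L) = (2/L)*S by ring,
        Real.mul_rpow (by positivity) hS0.le] at h1
    have hSn : S^(n-1) * S = S^n := by
      nth_rewrite 2 [show n = (n-1)+1 by ring]
      rw [Real.rpow_add_one hS0.ne']
    have hfin : M^(n-1) * S ≤ (2/L)^(n-1) * S^n := by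
      calc M^(n-1)*S ≤ ((2/L)^(n-1) * S^(n-1)) * S :=
            mul_le_mul_of_nonneg_right hMn hS0.le
        _ = (2/L)^(n-1) * S^n := by rw [mul_assoc, hSn]
    have hcoef : (2/L)^(n-1) ≤ Cδ := by rw [hC]; linarith
    have h1 : (2/L)^(n-1) * S^n ≤ Cδ * S^n := mul_le_mul_of_nonneg_right hcoef hSn0
    have h2 : 0 ≤ Cδ * S^((n+2)/(4-n)) := mul_nonneg hCδ0.le hSe0
    calc h * (∑ i ∈ Icc (1:ℤ) (N:ℤ), u i ^ n) ≤ M^(n-1) * S := hA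
      _ ≤ (2/L)^(n-1) * S^n := hfin
      _ ≤ δ * D + Cδ * (S^((n+2)/(4-n)) + S^n) := by
          rw [mul_add]; linarith
  · -- large max case
    have hmSL : m ≤ S / L := by rw [le_div_iff₀ hL]; linarith
    have hmM2 : m < M/2 := by
      have e : 2*S/L = 2*(S/L) := by ring
      rw [e] at hM2; linarith
    have h34 : (3/4)*M^2 ≤ M^2 - m^2 := by
      have e0 : m^2 ≤ (M/2)^2 := pow_le_pow_left₀ hm0.le hmM2.le 2
      have e : (M/2)^2 = M^2/4 := by ring
      linarith
    have h34sq : ((3/4)*M^2)^2 ≤ (M^2 - m^2)^2 := by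
      have h0 : (0:ℝ) ≤ (3/4)*M^2 := by positivity
      exact pow_le_pow_left₀ h0 h34 2
    have t2' : (9/16)*M^3 ≤ 4*(S*D) := by
      have t1 : M * ((9/16)*M^3) ≤ M * (4*(S*D)) := by
        calc M * ((9/16)*M^3) = ((3/4)*M^2)^2 := by ring
          _ ≤ (M^2 - m^2)^2 := h34sq
          _ ≤ 4*M*S*D := hC2
          _ = M*(4*(S*D)) := by ring
      exact le_of_mul_le_mul_left t1 hM0
    have hM3 : M^3 ≤ 8*(S*D) := by linarith
    have e1 : (M^3 : ℝ)^θ = M^(n-1) := by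
      rw [← Real.rpow_natCast M 3, ← Real.rpow_mul hM0.le]
      congr 1
      rw [hθ]; push_cast; ring
    have hMn : M^(n-1) ≤ 8 * (S^θ * D^θ) := by
      have e2 : (M^3 : ℝ)^θ ≤ (8*(S*D))^θ :=
        Real.rpow_le_rpow (pow_nonneg hM0.le 3) hM3 hθ0.le
      have e3 : ((8:ℝ)*(S*D))^θ = 8^θ * (S^θ * D^θ) := by
        rw [Real.mul_rpow (by norm_num) hSD0, Real.mul_rpow hS0.le hD0]
      have e4 : (8:ℝ)^θ ≤ 8 := by
        calc (8:ℝ)^θ ≤ (8:ℝ)^(1:ℝ) :=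
              Real.rpow_le_rpow_of_exponent_le (by norm_num) hθ1.le
          _ = 8 := Real.rpow_one 8
      calc M^(n-1) = (M^3 : ℝ)^θ := e1.symm
        _ ≤ (8*(S*D))^θ := e2
        _ = 8^θ * (S^θ * D^θ) := e3
        _ ≤ 8 * (S^θ * D^θ) := mul_le_mul_of_nonneg_right e4
            (mul_nonneg (Real.rpow_nonneg hS0.le _) (Real.rpow_nonneg hD0 _))
    have e5 : S^θ * S = S^(θ+1) := (Real.rpow_add_one hS0.ne' θ).symm
    -- Young's inequality
    set p : ℝ := 1/θ with hpdef
    clear_value p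
    have hpq : Real.HolderConjugate p q := by
      refine Real.holderConjugate_iff.mpr ⟨?_, ?_⟩
      · rw [hpdef]; exact one_lt_one_div hθ0 hθ1
      · rw [hpdef, hqdef, one_div, inv_inv, hθ]
        rw [show ((3:ℝ)/(4-n))⁻¹ = (4-n)/3 by rw [inv_div]]
        ring
    set x : ℝ := (δ*D)^θ with hxdef
    set y : ℝ := (8*δ^(-θ)) * S^(θ+1) with hydef
    clear_value x y
    have hx0 : 0 ≤ x := by rw [hxdef]; exact Real.rpow_nonneg (mul_nonneg hδ.le hD0) _
    have hy0 : 0 ≤ y := by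
      rw [hydef]; exact mul_nonneg (by positivity) (Real.rpow_nonneg hS0.le _)
    have hδc : δ^θ * δ^(-θ) = 1 := by
      rw [← Real.rpow_add hδ]; simp
    have hxy : x * y = 8 * (D^θ * S^(θ+1)) := by
      rw [hxdef, hydef, Real.mul_rpow hδ.le hD0]
      linear_combination (8 * D^θ * S^(θ+1)) * hδc
    have hxp : x^p = δ*D := by
      rw [hxdef, ← Real.rpow_mul (mul_nonneg hδ.le hD0),
        show θ*p = 1 by rw [hpdef]; field_simp, Real.rpow_one]
    have hyq : y^q = (8*δ^(-θ))^q * S^((n+2)/(4-n)) := by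
      rw [hydef, Real.mul_rpow (by positivity) (Real.rpow_nonneg hS0.le _),
        ← Real.rpow_mul hS0.le]
      congr 1
      rw [hθ, hqdef]; field_simp; ring
    have young : x*y ≤ x^p/p + y^q/q :=
      Real.young_inequality_of_nonneg hx0 hy0 hpq
    have hy1 : x^p/p ≤ δ*D := by
      rw [hxp]; exact div_le_self hδD0 hpq.lt.le
    have hy2 : y^q/q ≤ (8*δ^(-θ))^q * S^((n+2)/(4-n)) := by
      rw [hyq]
      exact div_le_self (mul_nonneg hc2 hSe0) hq1
    have hcoef2 : (8*δ^(-θ))^q ≤ Cδ := by rw [hC]; linarith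
    have hlast : (8*δ^(-θ))^q * S^((n+2)/(4-n)) ≤ Cδ * (S^((n+2)/(4-n)) + S^n) := by
      have l1 : (8*δ^(-θ))^q * S^((n+2)/(4-n)) ≤ Cδ * S^((n+2)/(4-n)) :=
        mul_le_mul_of_nonneg_right hcoef2 hSe0
      have l2 : 0 ≤ Cδ * S^n := mul_nonneg hCδ0.le hSn0
      rw [mul_add]; linarith
    calc h * (∑ i ∈ Icc (1:ℤ) (N:ℤ), u i ^ n) ≤ M^(n-1) * S := hA
      _ ≤ (8 * (S^θ * D^θ)) * S := mul_le_mul_of_nonneg_right hMn hS0.le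
      _ = 8 * (D^θ * S^(θ+1)) := by rw [← e5]; ring
      _ = x * y := hxy.symm
      _ ≤ x^p/p + y^q/q := young
      _ ≤ δ*D + (8*δ^(-θ))^q * S^((n+2)/(4-n)) := add_le_add hy1 hy2
      _ ≤ δ*D + Cδ * (S^((n+2)/(4-n)) + S^n) := by linarith
end

section
/- Let n ∈ [2,4) and L > 0. For every δ > 0 there exists a constant C_δ > 0, depending only on n, L and δ, such that for every positive integer N, with h = L/N, and every N-periodic sequence u with u_i > 0 for all i, one has h Σ_i u_i^{n−2} d_i² ≤ δ · h Σ_i u_i^{n−4} d_i⁴ + δ · h Σ_i d_i² + C_δ · ( ( h Σ_i u_i )^{(n+2)/(4−n)} + ( h Σ_i u_i )^n ). -/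
open Finset

lemma aux_young (δ x y : ℝ) (hδ : 0 < δ) : x * y ≤ δ * x ^ 2 + y ^ 2 / (4 * δ) := by
  have h4 : (0:ℝ) < 4 * δ := by positivity
  rw [← sub_nonneg]
  have : δ * x ^ 2 + y ^ 2 / (4 * δ) - x * y = (2 * δ * x - y)^2 / (4 * δ) := by
    field_simp; ring
  rw [this]; positivity

lemma aux_telescope (f : ℤ → ℝ) (i : ℤ) : ∀ j, i ≤ j →
    ∑ k ∈ Ico i j, (f (k + 1) - f k) = f j - f i := by
  intro j hij
  obtain ⟨t, rfl⟩ : ∃ t : ℕ, j = i + t := ⟨(j - i).toNat, by omega⟩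
  clear hij
  induction t with
  | zero => simp
  | succ m ih =>
    have heq : Ico i (i + (m + 1 : ℕ)) = insert (i + m) (Ico i (i + (m:ℕ))) := by
      ext x; simp only [mem_Ico, mem_insert]; omega
    rw [heq, Finset.sum_insert (by simp), ih]
    push_cast
    ring_nf

lemma aux_abs_telescope (f : ℤ → ℝ) (N : ℕ) {i j : ℤ} (hi : i ∈ Icc (1:ℤ) (N:ℤ))
    (hj : j ∈ Icc (1:ℤ) (N:ℤ)) :
    f j - f i ≤ ∑ k ∈ Icc (1:ℤ) (N:ℤ), |f (k + 1) - f k| := by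
  simp only [mem_Icc] at hi hj
  have key : ∀ a b : ℤ, 1 ≤ a → a ≤ b → b ≤ (N:ℤ) →
      |f b - f a| ≤ ∑ k ∈ Icc (1:ℤ) (N:ℤ), |f (k + 1) - f k| := by
    intro a b ha hab hb
    rw [← aux_telescope f a b hab]
    calc |∑ k ∈ Ico a b, (f (k+1) - f k)| ≤ ∑ k ∈ Ico a b, |f (k+1) - f k| :=
          Finset.abs_sum_le_sum_abs _ _
      _ ≤ ∑ k ∈ Icc (1:ℤ) (N:ℤ), |f (k + 1) - f k| := by
          apply Finset.sum_le_sum_of_subset_of_nonneg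
          · intro x hx; simp only [mem_Ico, mem_Icc] at *; omega
          · intro x _ _; exact abs_nonneg _
  rcases le_total i j with hij | hij
  · exact (le_abs_self _).trans (key i j hi.1 hij hj.2)
  · have := key j i hj.1 hij hi.2
    rw [abs_sub_comm] at this
    exact (le_abs_self _).trans this

lemma aux_chain {x y : ℝ} (hx : 0 < x) (hy : 0 < y) :
    |y * Real.sqrt y - x * Real.sqrt x| ≤ 2 * (Real.sqrt x + Real.sqrt y) * |y - x| := by
  have key : ∀ a b : ℝ, 0 < a → a ≤ b →
      b * Real.sqrt b - a * Real.sqrt a ≤ 2 * (Real.sqrt a + Real.sqrt b) * (b - a) := by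
    intro a b ha hab
    have hsa := Real.sqrt_nonneg a
    have hsb := Real.sqrt_nonneg b
    have hsq : Real.sqrt a ≤ Real.sqrt b := Real.sqrt_le_sqrt hab
    have h2a : Real.sqrt a * Real.sqrt a = a := Real.mul_self_sqrt ha.le
    have h2b : Real.sqrt b * Real.sqrt b = b := Real.mul_self_sqrt (ha.le.trans hab)
    nlinarith [mul_nonneg (mul_nonneg (sub_nonneg.2 hsq) hsa) hsb,
      mul_nonneg (mul_nonneg (sub_nonneg.2 hsq) hsa) hsa,
      mul_nonneg (mul_nonneg (sub_nonneg.2 hsq) hsb) hsb]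
  rcases le_total x y with hxy | hxy
  · have hnn : (0:ℝ) ≤ y * Real.sqrt y - x * Real.sqrt x := by
      nlinarith [Real.sqrt_le_sqrt hxy, Real.sqrt_nonneg x, Real.sqrt_nonneg y]
    rw [abs_of_nonneg hnn, abs_of_nonneg (sub_nonneg.2 hxy)]
    exact key x y hx hxy
  · have hnn : (0:ℝ) ≤ x * Real.sqrt x - y * Real.sqrt y := by
      nlinarith [Real.sqrt_le_sqrt hxy, Real.sqrt_nonneg x, Real.sqrt_nonneg y]
    rw [abs_sub_comm, abs_of_nonneg hnn, abs_sub_comm y x, abs_of_nonneg (sub_nonneg.2 hxy)]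
    have := key y x hy hxy
    nlinarith [this]

lemma aux_two_rpow {x y θ : ℝ} (hx : 0 ≤ x) (hy : 0 ≤ y) (hθ : 0 ≤ θ) :
    (x + y) ^ θ ≤ 2 ^ θ * (x ^ θ + y ^ θ) := by
  rcases le_total x y with hxy | hxy
  · calc (x + y) ^ θ ≤ (2 * y) ^ θ :=
        Real.rpow_le_rpow (by linarith) (by linarith) hθ
      _ = 2 ^ θ * y ^ θ := Real.mul_rpow (by norm_num) hy
      _ ≤ 2 ^ θ * (x ^ θ + y ^ θ) := by
        have := Real.rpow_nonneg hx θ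
        have h2 : (0:ℝ) ≤ 2 ^ θ := Real.rpow_nonneg (by norm_num) θ
        nlinarith
  · calc (x + y) ^ θ ≤ (2 * x) ^ θ :=
        Real.rpow_le_rpow (by linarith) (by linarith) hθ
      _ = 2 ^ θ * x ^ θ := Real.mul_rpow (by norm_num) hx
      _ ≤ 2 ^ θ * (x ^ θ + y ^ θ) := by
        have := Real.rpow_nonneg hy θ
        have h2 : (0:ℝ) ≤ 2 ^ θ := Real.rpow_nonneg (by norm_num) θ
        nlinarith

lemma aux_shift (N : ℕ) (hN : 0 < N) (g : ℤ → ℝ) (hper : g (1 + (N:ℤ)) = g 1) :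
    ∑ k ∈ Icc (1:ℤ) (N:ℤ), g (k + 1) = ∑ k ∈ Icc (1:ℤ) (N:ℤ), g k := by
  have h1 : ∑ k ∈ Icc (1:ℤ) (N:ℤ), g (k + 1) = ∑ k ∈ Icc (2:ℤ) ((N:ℤ)+1), g k := by
    apply Finset.sum_nbij' (fun k => k + 1) (fun k => k - 1) <;>
      intros <;> simp_all [Finset.mem_Icc] <;> omega
  have h2 : Icc (2:ℤ) ((N:ℤ)+1) = insert ((N:ℤ)+1) (Icc (2:ℤ) (N:ℤ)) := by
    ext x; simp only [mem_Icc, mem_insert]; omega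
  have h3 : Icc (1:ℤ) (N:ℤ) = insert (1:ℤ) (Icc (2:ℤ) (N:ℤ)) := by
    ext x; simp only [mem_Icc, mem_insert]; omega
  rw [h1, h2, Finset.sum_insert (by simp), h3, Finset.sum_insert (by simp)]
  rw [show (N:ℤ) + 1 = 1 + (N:ℤ) by ring, hper]

set_option maxHeartbeats 2000000 in
/-- `h Σ_i u_i^{n-2} d_i² ≤ δ h Σ_i u_i^{n-4} d_i⁴ + δ h Σ_i d_i²
+ C_δ ((h Σ_i u_i)^{(n+2)/(4-n)} + (h Σ_i u_i)^n)`. -/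
theorem statement12 (n L : ℝ) (hn : n ∈ Set.Ico (2 : ℝ) 4) (hL : 0 < L) :
    ∀ δ : ℝ, 0 < δ → ∃ Cδ : ℝ, 0 < Cδ ∧
      ∀ (N : ℕ) (hN : 0 < N) (h : ℝ) (hh : h = L / N)
        (u : ℤ → ℝ) (hper : ∀ i : ℤ, u (i + (N : ℤ)) = u i) (hpos : ∀ i : ℤ, 0 < u i),
        h * (∑ i ∈ Icc (1 : ℤ) (N : ℤ), u i ^ (n - 2) * (dq h u i) ^ 2) ≤
          δ * (h * ∑ i ∈ Icc (1 : ℤ) (N : ℤ), u i ^ (n - 4) * (dq h u i) ^ 4)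
          + δ * (h * ∑ i ∈ Icc (1 : ℤ) (N : ℤ), (dq h u i) ^ 2)
          + Cδ * ((h * ∑ i ∈ Icc (1 : ℤ) (N : ℤ), u i) ^ ((n + 2) / (4 - n))
              + (h * ∑ i ∈ Icc (1 : ℤ) (N : ℤ), u i) ^ n) := by
  obtain ⟨hn2, hn4⟩ := hn
  intro δ hδ
  set θ : ℝ := 2 * (n - 1) / 3 with hθdef
  set lam : ℝ := (n - 1) / 3 with hlamdef
  have hlam0 : 0 < lam := by rw [hlamdef]; linarith
  have hlam1 : lam < 1 := by rw [hlamdef]; linarith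
  have hθ0 : 0 ≤ θ := by rw [hθdef]; linarith
  have hθlam : θ = 2 * lam := by rw [hθdef, hlamdef]; ring
  set A : ℝ := (1 / (4 * δ)) * 2 ^ θ * 16 ^ lam with hA
  have hA0 : 0 < A := by
    have := Real.rpow_pos_of_pos (show (0:ℝ) < 2 by norm_num) θ
    have := Real.rpow_pos_of_pos (show (0:ℝ) < 16 by norm_num) lam
    positivity
  set ε : ℝ := δ / (A + 1) with hε
  have hε0 : 0 < ε := by positivity
  set C1 : ℝ := (1 / (4 * δ)) * 2 ^ θ / L ^ (n - 1) with hC1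
  set C2 : ℝ := A * (1 - lam) * ε ^ (-(lam / (1 - lam))) with hC2
  have hC10 : 0 < C1 := by
    have := Real.rpow_pos_of_pos (show (0:ℝ) < 2 by norm_num) θ
    have := Real.rpow_pos_of_pos hL (n - 1)
    positivity
  have hC20 : 0 ≤ C2 := by
    have h1l : 0 < 1 - lam := by linarith
    rw [hC2]; positivity
  refine ⟨max C1 C2 + 1, by have := le_max_left C1 C2; linarith, ?_⟩
  intro N hN h hh u hper hpos
  set s : Finset ℤ := Icc (1 : ℤ) (N : ℤ) with hs
  have hNR : (0:ℝ) < (N:ℝ) := by exact_mod_cast hN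
  have hh0 : 0 < h := by rw [hh]; positivity
  have hsne : s.Nonempty := ⟨1, by simp [hs, mem_Icc]; omega⟩
  set a : ℝ := h * ∑ i ∈ s, u i with ha
  have hsum0 : 0 < ∑ i ∈ s, u i := Finset.sum_pos (fun i _ => hpos i) hsne
  have ha0 : 0 < a := mul_pos hh0 hsum0
  set X : ℝ := h * ∑ i ∈ s, (dq h u i) ^ 2 with hX
  have hX0 : 0 ≤ X := by
    apply mul_nonneg hh0.le (Finset.sum_nonneg fun i _ => sq_nonneg _)
  have hcard : (s.card : ℝ) = (N : ℝ) := by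
    rw [hs, Int.card_Icc]
    norm_num
  have hhN : h * N = L := by rw [hh]; field_simp
  -- minimum element
  obtain ⟨i₀, hi₀s, hi₀⟩ : ∃ i ∈ s, u i ≤ a / L := by
    apply Finset.exists_le_of_sum_le hsne
    rw [Finset.sum_const, nsmul_eq_mul, hcard]
    have hval : (N:ℝ) * (a / L) = ∑ i ∈ s, u i := by
      rw [ha, ← hhN]
      field_simp
    rw [hval]
  set f : ℤ → ℝ := fun k => u k * Real.sqrt (u k) with hf
  set T : ℝ := ∑ k ∈ s, |f (k + 1) - f k| with hT
  have hT0 : 0 ≤ T := Finset.sum_nonneg fun k _ => abs_nonneg _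
  have haL0 : 0 < a / L := by positivity
  set Q : ℝ := (a / L) * Real.sqrt (a / L) + T with hQ
  have hQ0 : 0 ≤ Q := by positivity
  have hsup : ∀ j ∈ s, u j ^ (3/2 : ℝ) ≤ Q := by
    intro j hj
    have h32 : u j ^ (3/2 : ℝ) = f j := by
      show u j ^ (3/2 : ℝ) = u j * Real.sqrt (u j)
      rw [show (3/2 : ℝ) = 1 + 1/2 by norm_num, Real.rpow_add (hpos j), Real.rpow_one,
        ← Real.sqrt_eq_rpow]
    rw [h32, hQ]
    have h1 : f j - f i₀ ≤ T := aux_abs_telescope f N hi₀s hj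
    have h2 : f i₀ ≤ (a/L) * Real.sqrt (a/L) := by
      show u i₀ * Real.sqrt (u i₀) ≤ _
      exact mul_le_mul hi₀ (Real.sqrt_le_sqrt hi₀) (Real.sqrt_nonneg _) haL0.le
    linarith
  have hTsq : T ^ 2 ≤ 16 * X * a := by
    set F : ℤ → ℝ := fun k => Real.sqrt h * (Real.sqrt (u k) + Real.sqrt (u (k+1))) with hFd
    set G : ℤ → ℝ := fun k => Real.sqrt h * |dq h u k| with hGd
    have hsh : Real.sqrt h * Real.sqrt h = h := Real.mul_self_sqrt hh0.le
    have hstep : T ≤ 2 * ∑ k ∈ s, F k * G k := by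
      rw [hT, Finset.mul_sum]
      apply Finset.sum_le_sum
      intro k hk
      have hchain := aux_chain (hpos k) (hpos (k+1))
      have hdq : |u (k+1) - u k| = h * |dq h u k| := by
        unfold dq
        rw [abs_div, abs_of_pos hh0]
        field_simp
      calc |f (k+1) - f k|
          ≤ 2 * (Real.sqrt (u k) + Real.sqrt (u (k+1))) * |u (k+1) - u k| := hchain
        _ = 2 * (F k * G k) := by
            rw [hdq, hFd, hGd]; dsimp only
            linear_combination (-(2 * (Real.sqrt (u k) + Real.sqrt (u (k+1))) * |dq h u k|)) * hsh
    have hcs := Finset.sum_mul_sq_le_sq_mul_sq s F G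
    have hF2 : ∑ k ∈ s, F k ^ 2 ≤ 4 * a := by
      have hterm : ∀ k ∈ s, F k ^ 2 ≤ h * (2 * (u k + u (k+1))) := by
        intro k hk
        have h1 : Real.sqrt (u k) * Real.sqrt (u k) = u k := Real.mul_self_sqrt (hpos k).le
        have h2 : Real.sqrt (u (k+1)) * Real.sqrt (u (k+1)) = u (k+1) :=
          Real.mul_self_sqrt (hpos (k+1)).le
        rw [hFd]; dsimp only
        rw [mul_pow, sq, hsh]
        have : (Real.sqrt (u k) + Real.sqrt (u (k+1))) ^ 2 ≤ 2 * (u k + u (k+1)) := by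
          nlinarith [sq_nonneg (Real.sqrt (u k) - Real.sqrt (u (k+1)))]
        nlinarith [hh0.le]
      calc ∑ k ∈ s, F k ^ 2 ≤ ∑ k ∈ s, h * (2 * (u k + u (k+1))) := Finset.sum_le_sum hterm
        _ = 2 * h * (∑ k ∈ s, u k + ∑ k ∈ s, u (k+1)) := by
            rw [← Finset.sum_add_distrib, Finset.mul_sum]; congr 1; ext k; ring
        _ = 4 * a := by
            rw [aux_shift N hN u (hper 1), ha]; ring
    have hG2 : ∑ k ∈ s, G k ^ 2 = X := by
      rw [hX, Finset.mul_sum]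
      apply Finset.sum_congr rfl
      intro k hk
      rw [hGd]; dsimp only
      rw [mul_pow, sq_abs, sq, hsh]
    have hFG0 : 0 ≤ ∑ k ∈ s, F k * G k := by
      apply Finset.sum_nonneg
      intro k hk
      exact mul_nonneg (by positivity) (by positivity)
    have hG20 : 0 ≤ ∑ k ∈ s, G k ^ 2 := Finset.sum_nonneg fun k _ => sq_nonneg _
    calc T ^ 2 ≤ (2 * ∑ k ∈ s, F k * G k) ^ 2 := by
          apply pow_le_pow_left₀ hT0 hstep
      _ = 4 * (∑ k ∈ s, F k * G k) ^ 2 := by ring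
      _ ≤ 4 * ((∑ k ∈ s, F k ^ 2) * (∑ k ∈ s, G k ^ 2)) := by linarith [hcs]
      _ ≤ 4 * ((4 * a) * X) := by
          rw [hG2] at hcs ⊢
          have := mul_le_mul_of_nonneg_right hF2 hX0
          linarith
      _ = 16 * X * a := by ring
  have h4n : (0:ℝ) < 4 - n := by linarith
  have h1l : 0 < 1 - lam := by linarith
  have hp1 : (0:ℝ) ≤ a ^ ((n+2)/(4-n)) := Real.rpow_nonneg ha0.le _
  have hp2 : (0:ℝ) ≤ a ^ n := Real.rpow_nonneg ha0.le _
  have h2θ : (0:ℝ) ≤ 2 ^ θ := Real.rpow_nonneg (by norm_num) θ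
  -- bound on Q ^ θ
  have hQθ : Q ^ θ ≤ 2 ^ θ * (a ^ (n-1) / L ^ (n-1) + 16 ^ lam * X ^ lam * a ^ lam) := by
    have h1 : Q ^ θ ≤ 2 ^ θ * (((a/L) * Real.sqrt (a/L)) ^ θ + T ^ θ) := by
      rw [hQ]; exact aux_two_rpow (by positivity) hT0 hθ0
    have h2 : ((a/L) * Real.sqrt (a/L)) ^ θ = a ^ (n-1) / L ^ (n-1) := by
      have e : (a/L) * Real.sqrt (a/L) = (a/L) ^ (3/2 : ℝ) := by
        rw [show (3/2:ℝ) = 1 + 1/2 by norm_num, Real.rpow_add haL0, Real.rpow_one,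
          ← Real.sqrt_eq_rpow]
      rw [e, ← Real.rpow_mul haL0.le, show (3/2:ℝ) * θ = n - 1 by rw [hθdef]; ring]
      exact Real.div_rpow ha0.le hL.le _
    have h3 : T ^ θ ≤ 16 ^ lam * X ^ lam * a ^ lam := by
      calc T ^ θ = (T ^ 2) ^ lam := by
            rw [hθlam, Real.rpow_mul hT0, Real.rpow_two]
        _ ≤ (16 * X * a) ^ lam := Real.rpow_le_rpow (sq_nonneg T) hTsq hlam0.le
        _ = 16 ^ lam * X ^ lam * a ^ lam := by
            rw [Real.mul_rpow (by positivity) ha0.le,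
              Real.mul_rpow (by norm_num) hX0]
    rw [h2] at h1
    have := mul_le_mul_of_nonneg_left (add_le_add_left h3 (a ^ (n-1) / L ^ (n-1))) h2θ
    linarith
  -- bound on h * Σ u^n
  have hBn : h * ∑ k ∈ s, u k ^ n ≤ Q ^ θ * a := by
    have hterm : ∀ k ∈ s, u k ^ n ≤ Q ^ θ * u k := by
      intro k hk
      have e1 : u k ^ n = (u k ^ (3/2:ℝ)) ^ θ * u k := by
        rw [← Real.rpow_mul (hpos k).le, show (3/2:ℝ)*θ = n - 1 by rw [hθdef]; ring,
          show n = (n-1) + 1 by ring, Real.rpow_add_one (hpos k).ne']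
        ring_nf
      rw [e1]
      exact mul_le_mul_of_nonneg_right
        (Real.rpow_le_rpow (Real.rpow_nonneg (hpos k).le _) (hsup k hk) hθ0) (hpos k).le
    calc h * ∑ k ∈ s, u k ^ n ≤ h * ∑ k ∈ s, Q ^ θ * u k :=
          mul_le_mul_of_nonneg_left (Finset.sum_le_sum hterm) hh0.le
      _ = Q ^ θ * a := by rw [← Finset.mul_sum, ha]; ring
  -- Young's inequality
  have hyoung : X ^ lam * a ^ (lam + 1) ≤
      lam * (ε * X) + (1 - lam) * (ε ^ (-(lam/(1-lam))) * a ^ ((n+2)/(4-n))) := by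
    set p2 : ℝ := (a ^ (lam+1) * ε ^ (-lam)) ^ (1/(1-lam)) with hp2
    have hp20 : 0 ≤ p2 := Real.rpow_nonneg (by positivity) _
    have hgm := Real.geom_mean_le_arith_mean2_weighted hlam0.le h1l.le
      (mul_nonneg hε0.le hX0) hp20 (by ring)
    have e1 : (ε * X) ^ lam = ε ^ lam * X ^ lam := Real.mul_rpow hε0.le hX0
    have e2 : p2 ^ (1-lam) = a ^ (lam+1) * ε ^ (-lam) := by
      rw [hp2, ← Real.rpow_mul (by positivity), one_div, inv_mul_cancel₀ h1l.ne',
        Real.rpow_one]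
    have e3 : ε ^ lam * ε ^ (-lam) = 1 := by
      rw [← Real.rpow_add hε0]; simp
    have e4 : p2 = ε ^ (-(lam/(1-lam))) * a ^ ((n+2)/(4-n)) := by
      rw [hp2, Real.mul_rpow (Real.rpow_nonneg ha0.le _) (Real.rpow_nonneg hε0.le _),
        ← Real.rpow_mul ha0.le, ← Real.rpow_mul hε0.le,
        show (lam+1) * (1/(1-lam)) = (n+2)/(4-n) by
          rw [hlamdef, show (1:ℝ)-(n-1)/3 = (4-n)/3 by ring,
            show ((n-1)/3 + 1 : ℝ) = (n+2)/3 by ring, one_div, inv_div, div_mul_div_comm,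
            mul_comm (n+2) 3, mul_div_mul_left _ _ (by norm_num : (3:ℝ) ≠ 0)],
        show (-lam) * (1/(1-lam)) = -(lam/(1-lam)) by field_simp]
      ring
    calc X ^ lam * a ^ (lam+1) = ((ε*X) ^ lam) * (p2 ^ (1-lam)) := by
          rw [e1, e2]
          linear_combination (-(X ^ lam * a ^ (lam+1))) * e3
      _ ≤ lam * (ε*X) + (1-lam) * p2 := hgm
      _ = lam * (ε*X) + (1-lam) * (ε ^ (-(lam/(1-lam))) * a ^ ((n+2)/(4-n))) := by rw [e4]
  -- step 1 : pointwise Young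
  have hstep1 : h * ∑ i ∈ s, u i ^ (n-2) * (dq h u i)^2 ≤
      δ * (h * ∑ i ∈ s, u i ^ (n-4) * (dq h u i)^4) + (1/(4*δ)) * (h * ∑ i ∈ s, u i ^ n) := by
    have hterm : ∀ i ∈ s, u i ^ (n-2) * (dq h u i)^2 ≤
        δ * (u i ^ (n-4) * (dq h u i)^4) + (1/(4*δ)) * u i ^ n := by
      intro i hi
      have hx := aux_young δ (u i ^ ((n-4)/2 : ℝ) * (dq h u i)^2) (u i ^ (n/2 : ℝ)) hδ
      have e1 : (u i ^ ((n-4)/2:ℝ) * (dq h u i)^2) * (u i ^ (n/2:ℝ))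
          = u i ^ (n-2) * (dq h u i)^2 := by
        rw [show (n-2:ℝ) = (n-4)/2 + n/2 by ring, Real.rpow_add (hpos i)]; ring
      have e2 : (u i ^ ((n-4)/2:ℝ) * (dq h u i)^2)^2 = u i ^ (n-4) * (dq h u i)^4 := by
        have e2' : (u i ^ ((n-4)/2:ℝ))^2 = u i ^ (n-4) := by
          rw [← Real.rpow_natCast (u i ^ ((n-4)/2:ℝ)) 2, ← Real.rpow_mul (hpos i).le,
            show ((n-4)/2 * ((2:ℕ):ℝ)) = n - 4 by push_cast; ring]
        rw [mul_pow, e2']; ring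
      have e3 : (u i ^ (n/2:ℝ))^2 = u i ^ n := by
        rw [← Real.rpow_natCast (u i ^ (n/2:ℝ)) 2, ← Real.rpow_mul (hpos i).le,
          show (n/2 * ((2:ℕ):ℝ)) = n by push_cast; ring]
      rw [e1, e2, e3] at hx
      have hdd : (1/(4*δ)) * u i ^ n = u i ^ n / (4*δ) := by ring
      rw [hdd]
      exact hx
    calc h * ∑ i ∈ s, u i ^ (n-2) * (dq h u i)^2
        ≤ h * ∑ i ∈ s, (δ * (u i ^ (n-4) * (dq h u i)^4) + (1/(4*δ)) * u i ^ n) :=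
          mul_le_mul_of_nonneg_left (Finset.sum_le_sum hterm) hh0.le
      _ = δ * (h * ∑ i ∈ s, u i ^ (n-4) * (dq h u i)^4)
            + (1/(4*δ)) * (h * ∑ i ∈ s, u i ^ n) := by
          rw [Finset.sum_add_distrib, ← Finset.mul_sum, ← Finset.mul_sum]
          ring
  -- assembly
  have hrw1 : a ^ (n-1) * a = a ^ n := by
    rw [← Real.rpow_add_one ha0.ne' (n-1)]
    congr 1
    ring
  have hrw2 : a ^ lam * a = a ^ (lam+1) := by
    rw [Real.rpow_add_one ha0.ne']
  have hmid : (1/(4*δ)) * (h * ∑ i ∈ s, u i ^ n) ≤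
      C1 * a ^ n + A * (X ^ lam * a ^ (lam+1)) := by
    have hQa : Q ^ θ * a ≤ 2 ^ θ * (a ^ (n-1) / L ^ (n-1) + 16 ^ lam * X ^ lam * a ^ lam) * a :=
      mul_le_mul_of_nonneg_right hQθ ha0.le
    have h16 : (0:ℝ) ≤ 16 ^ lam := Real.rpow_nonneg (by norm_num) lam
    have hLn : (0:ℝ) < L ^ (n-1) := Real.rpow_pos_of_pos hL _
    have hE : 2 ^ θ * (a ^ (n-1) / L ^ (n-1) + 16 ^ lam * X ^ lam * a ^ lam) * a
        = 2 ^ θ / L ^ (n-1) * a ^ n + (2 ^ θ * 16 ^ lam) * (X ^ lam * a ^ (lam+1)) := by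
      rw [← hrw1, ← hrw2]; field_simp
    have hfin : h * ∑ k ∈ s, u k ^ n ≤
        2 ^ θ / L ^ (n-1) * a ^ n + (2 ^ θ * 16 ^ lam) * (X ^ lam * a ^ (lam+1)) := by
      rw [← hE]; exact hBn.trans hQa
    have hc : (0:ℝ) ≤ 1/(4*δ) := by positivity
    have := mul_le_mul_of_nonneg_left hfin hc
    rw [hC1, hA]
    calc (1/(4*δ)) * (h * ∑ i ∈ s, u i ^ n)
        ≤ (1/(4*δ)) * (2 ^ θ / L ^ (n-1) * a ^ n + (2 ^ θ * 16 ^ lam) * (X ^ lam * a ^ (lam+1))) := this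
      _ = 1/(4*δ) * 2 ^ θ / L ^ (n-1) * a ^ n
            + 1/(4*δ) * 2 ^ θ * 16 ^ lam * (X ^ lam * a ^ (lam+1)) := by ring
  have hAyoung : A * (X ^ lam * a ^ (lam+1)) ≤ δ * X + C2 * a ^ ((n+2)/(4-n)) := by
    have := mul_le_mul_of_nonneg_left hyoung hA0.le
    have hAε : A * (lam * (ε * X)) ≤ δ * X := by
      have hkey : A * lam * ε ≤ δ := by
        have hA1 : (0:ℝ) < A + 1 := by linarith
        have h1 : A * lam ≤ A + 1 := by
          have : A * lam ≤ A * 1 := mul_le_mul_of_nonneg_left hlam1.le hA0.le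
          linarith
        have h2 : A * lam * ε ≤ (A + 1) * ε := mul_le_mul_of_nonneg_right h1 hε0.le
        have h3 : (A + 1) * ε = δ := by rw [hε]; field_simp
        linarith
      calc A * (lam * (ε * X)) = (A * lam * ε) * X := by ring
        _ ≤ δ * X := mul_le_mul_of_nonneg_right hkey hX0
    have hC2e : A * ((1 - lam) * (ε ^ (-(lam/(1-lam))) * a ^ ((n+2)/(4-n))))
        = C2 * a ^ ((n+2)/(4-n)) := by rw [hC2]; ring
    linarith
  have hc1 : C1 ≤ max C1 C2 + 1 := by have := le_max_left C1 C2; linarith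
  have hc2 : C2 ≤ max C1 C2 + 1 := by have := le_max_right C1 C2; linarith
  have hf1 : C1 * a ^ n ≤ (max C1 C2 + 1) * a ^ n := mul_le_mul_of_nonneg_right hc1 hp2
  have hf2 : C2 * a ^ ((n+2)/(4-n)) ≤ (max C1 C2 + 1) * a ^ ((n+2)/(4-n)) :=
    mul_le_mul_of_nonneg_right hc2 hp1
  calc h * ∑ i ∈ s, u i ^ (n-2) * (dq h u i)^2
      ≤ δ * (h * ∑ i ∈ s, u i ^ (n-4) * (dq h u i)^4) + (1/(4*δ)) * (h * ∑ i ∈ s, u i ^ n) :=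
        hstep1
    _ ≤ δ * (h * ∑ i ∈ s, u i ^ (n-4) * (dq h u i)^4) + C1 * a ^ n
          + A * (X ^ lam * a ^ (lam+1)) := by linarith
    _ ≤ δ * (h * ∑ i ∈ s, u i ^ (n-4) * (dq h u i)^4) + C1 * a ^ n
          + δ * X + C2 * a ^ ((n+2)/(4-n)) := by linarith
    _ ≤ δ * (h * ∑ i ∈ s, u i ^ (n-4) * (dq h u i)^4) + δ * X
          + (max C1 C2 + 1) * (a ^ ((n+2)/(4-n)) + a ^ n) := by linarith
    _ = δ * (h * ∑ i ∈ s, u i ^ (n-4) * (dq h u i)^4) + δ * (h * ∑ i ∈ s, (dq h u i)^2)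
          + (max C1 C2 + 1) * (a ^ ((n+2)/(4-n)) + a ^ n) := by rw [hX]
end

section
/- Let n ∈ (2,3) and C_osc ≥ 1, and for σ ∈ (0,1) set m_σ(s) := (max(σ, s))^n for s > 0. There exists a constant C₁ > 0, depending only on n and C_osc, such that for every σ ∈ (0,1), every L > 0, every positive integer N with h = L/N, and every N-periodic sequence u with u_i > 0 satisfying the oscillation condition u_i ≤ C_osc u_{i+1} and u_i ≤ C_osc u_{i−1} for all i, one has h Σ_i ( 1/m_σ(u_i) + 1/m_σ(u_{i−1}) ) · ( ( u_i^{n/2} − u_{i−1}^{n/2} ) / h )² ≤ C₁ · h Σ_i ( u_i^{n−2}/m_σ(u_i) + u_{i−1}^{n−2}/m_σ(u_{i−1}) ) · ( ( u_i − u_{i−1} ) / h )². -/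
open Finset
open Real

/-- Shifted mobility `m_σ(s) = (max(σ,s))^n`. -/
noncomputable def mob (n σ s : ℝ) : ℝ := (max σ s) ^ n


lemma key1 {p a b : ℝ} (hp : 1 ≤ p) (hb : 0 < b) (hab : b ≤ a) :
    a ^ p - b ^ p ≤ p * a ^ (p - 1) * (a - b) := by
  have ha : 0 < a := hb.trans_le hab
  have hs : -1 ≤ b / a - 1 := by
    have : 0 < b / a := div_pos hb ha
    linarith
  have hber := one_add_mul_self_le_rpow_one_add hs hp
  rw [add_sub_cancel, Real.div_rpow hb.le ha.le] at hber
  have hap : (0:ℝ) < a ^ p := Real.rpow_pos_of_pos ha p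
  have hmul := mul_le_mul_of_nonneg_left hber hap.le
  rw [mul_div_cancel₀ _ hap.ne'] at hmul
  have hexp : a ^ p = a ^ (p - 1) * a := by
    rw [← Real.rpow_add_one ha.ne']; ring_nf
  have h1 : a ^ p * (b / a) = a ^ (p - 1) * b := by
    rw [hexp]; field_simp
  nlinarith [hmul, h1, hexp]

lemma key2 {p a b : ℝ} (hp : 1 ≤ p) (ha : 0 < a) (hb : 0 < b) :
    (a ^ p - b ^ p) ^ 2 ≤ p ^ 2 * (max a b) ^ (2 * p - 2) * (a - b) ^ 2 := by
  have haux : ∀ x y : ℝ, 0 < y → y ≤ x →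
      (x ^ p - y ^ p) ^ 2 ≤ p ^ 2 * x ^ (2 * p - 2) * (x - y) ^ 2 := by
    intro x y hy hyx
    have hx : 0 < x := hy.trans_le hyx
    have h0 : 0 ≤ x ^ p - y ^ p :=
      sub_nonneg.2 (Real.rpow_le_rpow hy.le hyx (by linarith))
    have h1 := key1 hp hy hyx
    have hsq := mul_self_le_mul_self h0 h1
    have hrw : (p * x ^ (p - 1) * (x - y)) * (p * x ^ (p - 1) * (x - y))
        = p ^ 2 * x ^ (2 * p - 2) * (x - y) ^ 2 := by
      rw [show (2:ℝ) * p - 2 = (p - 1) + (p - 1) by ring, Real.rpow_add hx]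
      ring
    calc (x ^ p - y ^ p) ^ 2 = (x ^ p - y ^ p) * (x ^ p - y ^ p) := sq _
      _ ≤ _ := hsq
      _ = _ := hrw
  rcases le_total b a with hba | hab
  · simpa [max_eq_left hba] using haux a b hb hba
  · have := haux b a ha hab
    calc (a ^ p - b ^ p) ^ 2 = (b ^ p - a ^ p) ^ 2 := by ring
      _ ≤ p ^ 2 * b ^ (2 * p - 2) * (b - a) ^ 2 := this
      _ = p ^ 2 * (max a b) ^ (2 * p - 2) * (a - b) ^ 2 := by
          rw [max_eq_right hab]; ring

lemma termwise {n Cosc σ a b : ℝ} (hn2 : 2 < n) (hC : 1 ≤ Cosc) (hσ : 0 < σ)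
    (ha : 0 < a) (hb : 0 < b) (hab : a ≤ Cosc * b) (hba : b ≤ Cosc * a) :
    (1 / mob n σ a + 1 / mob n σ b) * (a ^ (n / 2) - b ^ (n / 2)) ^ 2 ≤
      ((n / 2) ^ 2 * Cosc ^ (n - 2)) *
        ((a ^ (n - 2) / mob n σ a + b ^ (n - 2) / mob n σ b) * (a - b) ^ 2) := by
  have hC0 : (0:ℝ) < Cosc := lt_of_lt_of_le one_pos hC
  have hma : 0 < mob n σ a := Real.rpow_pos_of_pos (lt_max_iff.2 (Or.inl hσ)) n
  have hmb : 0 < mob n σ b := Real.rpow_pos_of_pos (lt_max_iff.2 (Or.inl hσ)) n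
  set M := max a b with hM
  have hM0 : 0 < M := lt_max_iff.2 (Or.inl ha)
  have hn2' : (0:ℝ) ≤ n - 2 := by linarith
  have hkey := key2 (p := n / 2) (by linarith) ha hb
  rw [show 2 * (n / 2) - 2 = n - 2 by ring] at hkey
  have hMa : M ^ (n - 2) ≤ Cosc ^ (n - 2) * a ^ (n - 2) := by
    have hle : M ≤ Cosc * a := max_le (le_mul_of_one_le_left ha.le hC) hba
    calc M ^ (n - 2) ≤ (Cosc * a) ^ (n - 2) := Real.rpow_le_rpow hM0.le hle hn2'
      _ = Cosc ^ (n - 2) * a ^ (n - 2) := Real.mul_rpow hC0.le ha.le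
  have hMb : M ^ (n - 2) ≤ Cosc ^ (n - 2) * b ^ (n - 2) := by
    have hle : M ≤ Cosc * b := max_le hab (le_mul_of_one_le_left hb.le hC)
    calc M ^ (n - 2) ≤ (Cosc * b) ^ (n - 2) := Real.rpow_le_rpow hM0.le hle hn2'
      _ = Cosc ^ (n - 2) * b ^ (n - 2) := Real.mul_rpow hC0.le hb.le
  calc (1 / mob n σ a + 1 / mob n σ b) * (a ^ (n / 2) - b ^ (n / 2)) ^ 2
      ≤ (1 / mob n σ a + 1 / mob n σ b) * ((n / 2) ^ 2 * M ^ (n - 2) * (a - b) ^ 2) := by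
        apply mul_le_mul_of_nonneg_left hkey
        positivity
    _ = (n / 2) ^ 2 * ((M ^ (n - 2) * (1 / mob n σ a) + M ^ (n - 2) * (1 / mob n σ b))
          * (a - b) ^ 2) := by ring
    _ ≤ (n / 2) ^ 2 * ((Cosc ^ (n - 2) * a ^ (n - 2) * (1 / mob n σ a)
          + Cosc ^ (n - 2) * b ^ (n - 2) * (1 / mob n σ b)) * (a - b) ^ 2) := by
        gcongr
    _ = ((n / 2) ^ 2 * Cosc ^ (n - 2)) *
        ((a ^ (n - 2) / mob n σ a + b ^ (n - 2) / mob n σ b) * (a - b) ^ 2) := by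
        field_simp


/-- discrete estimate relating difference quotients of `u^{n/2}` to those of `u`,
weighted by the reciprocal shifted mobility. -/
theorem statement13 (n Cosc : ℝ) (hn : n ∈ Set.Ioo (2 : ℝ) 3) (hCosc : 1 ≤ Cosc) :
    ∃ C₁ : ℝ, 0 < C₁ ∧
      ∀ σ ∈ Set.Ioo (0 : ℝ) 1,
      ∀ (L : ℝ) (hL : 0 < L) (N : ℕ) (hN : 0 < N) (h : ℝ) (hh : h = L / N)
        (u : ℤ → ℝ) (hper : ∀ i : ℤ, u (i + (N : ℤ)) = u i) (hpos : ∀ i : ℤ, 0 < u i)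
        (hosc : ∀ i : ℤ, u i ≤ Cosc * u (i + 1) ∧ u i ≤ Cosc * u (i - 1)),
        h * (∑ i ∈ Icc (1 : ℤ) (N : ℤ),
            (1 / mob n σ (u i) + 1 / mob n σ (u (i - 1)))
              * ((u i ^ (n / 2) - u (i - 1) ^ (n / 2)) / h) ^ 2) ≤
          C₁ * (h * ∑ i ∈ Icc (1 : ℤ) (N : ℤ),
            (u i ^ (n - 2) / mob n σ (u i) + u (i - 1) ^ (n - 2) / mob n σ (u (i - 1)))
              * ((u i - u (i - 1)) / h) ^ 2) := by
  obtain ⟨hn2, hn3⟩ := hn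
  have hC0 : (0:ℝ) < Cosc := lt_of_lt_of_le one_pos hCosc
  refine ⟨(n / 2) ^ 2 * Cosc ^ (n - 2), by positivity, ?_⟩
  intro σ hσ L hL N hN h hh u hper hpos hosc
  have hh0 : 0 < h := by
    rw [hh]; exact div_pos hL (by exact_mod_cast hN)
  rw [mul_left_comm]
  apply mul_le_mul_of_nonneg_left _ hh0.le
  rw [Finset.mul_sum]
  apply Finset.sum_le_sum
  intro i _
  have hab : u i ≤ Cosc * u (i - 1) := (hosc i).2
  have hba : u (i - 1) ≤ Cosc * u i := by
    have := (hosc (i - 1)).1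
    simpa using this
  have hterm := termwise hn2 hCosc hσ.1 (hpos i) (hpos (i - 1)) hab hba
  have h2 : (0:ℝ) < h ^ 2 := by positivity
  calc (1 / mob n σ (u i) + 1 / mob n σ (u (i - 1)))
        * ((u i ^ (n / 2) - u (i - 1) ^ (n / 2)) / h) ^ 2
      = ((1 / mob n σ (u i) + 1 / mob n σ (u (i - 1)))
        * (u i ^ (n / 2) - u (i - 1) ^ (n / 2)) ^ 2) / h ^ 2 := by
        rw [div_pow]; ring
    _ ≤ (((n / 2) ^ 2 * Cosc ^ (n - 2)) *
        ((u i ^ (n - 2) / mob n σ (u i) + u (i - 1) ^ (n - 2) / mob n σ (u (i - 1)))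
          * (u i - u (i - 1)) ^ 2)) / h ^ 2 := by gcongr
    _ = ((n / 2) ^ 2 * Cosc ^ (n - 2)) *
        ((u i ^ (n - 2) / mob n σ (u i) + u (i - 1) ^ (n - 2) / mob n σ (u (i - 1)))
          * ((u i - u (i - 1)) / h) ^ 2) := by
        rw [div_pow]; ring
end
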